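/- arXiv:1611.01141 — 11 statements merged into one kernel-verified Lean document; each statement's English description precedes it below -/
import Mathlib

section
/- For a finite abelian group A and a subgroup B ≤ A, the double annihilator (B°)° equals B, where A is identified with its double dual via evaluation. -/
/-- The annihilator `B° = {χ ∈ Â : B ⊆ ker χ}` of a subgroup `B ≤ A` inside the
character group `Â = Hom(A, ℂ*)`. -/
def charAnnihilator (A : Type*) [CommGroup A] (B : Subgroup A) : Subgroup (A →* ℂˣ) where
  carrier := {χ | ∀ b ∈ B, χ b = 1}
  mul_mem' := by
    intro x y hx hy b hb
    simp [hx b hb, hy b hb]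
  one_mem' := by intro b hb; simp
  inv_mem' := by
    intro x hx b hb
    simp [hx b hb]

/-- Double annihilator property: for a finite abelian group `A` and a subgroup `B ≤ A`,
the set `(B°)° = {a ∈ A : χ(a) = 1 for all χ ∈ B°}` equals `B` (identifying `A` with its
double character dual via evaluation). -/
theorem double_annihilator_eq
    (A : Type*) [CommGroup A] [Fintype A] (B : Subgroup A) :
    {a : A | ∀ χ ∈ charAnnihilator A B, χ a = 1} = (B : Set A) := by
  ext a
  simp only [Set.mem_setOf_eq, SetLike.mem_coe]
  constructor
  · intro h
    by_contra ha
    have ha' : (QuotientGroup.mk a : A ⧸ B) ≠ 1 := by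
      simpa [QuotientGroup.eq_one_iff] using ha
    have : NeZero (Monoid.exponent (A ⧸ B)) := ⟨Monoid.exponent_ne_zero_of_finite⟩
    obtain ⟨φ, hφ⟩ := CommGroup.exists_apply_ne_one_of_hasEnoughRootsOfUnity (A ⧸ B) ℂ ha'
    have : φ.comp (QuotientGroup.mk' B) ∈ charAnnihilator A B := by
      intro b hb
      rw [MonoidHom.comp_apply, QuotientGroup.mk'_apply, (QuotientGroup.eq_one_iff b).mpr hb, map_one]
    exact hφ (h _ this)
  · intro hb χ hχ
    exact hχ a hb
end

section
/- For any finite ring R with identity, the map Θ : R → End(_R R̂) sending r to the endomorphism χ ↦ χ·r is an isomorphism of rings (with endomorphism composition taken as f·g = g∘f) and of right R-modules; in particular, every left-R-linear endomorphism of R̂ is given by right multiplication by a unique ring element. -/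
/-- The right scalar multiplication `χ · r` on the character bimodule `R̂`:
`(χ · r)(a) = χ(r * a)`. -/
def charRSmul {R : Type*} [Ring R] (r : R) (χ : AddChar R ℂˣ) : AddChar R ℂˣ :=
  χ.compAddMonoidHom (AddMonoidHom.mulLeft r)

/-- The left scalar multiplication `r · χ` on the character bimodule `R̂`:
`(r · χ)(a) = χ(a * r)`. -/
def charLSmul {R : Type*} [Ring R] (r : R) (χ : AddChar R ℂˣ) : AddChar R ℂˣ :=
  χ.compAddMonoidHom (AddMonoidHom.mulRight r)

/-- ℂˣ-valued character to ℂ-valued. -/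
def charToC {A : Type*} [AddCommGroup A] (χ : AddChar A ℂˣ) : AddChar A ℂ :=
  (Units.coeHom ℂ).compAddChar χ

/-- ℂ-valued character to ℂˣ-valued. -/
noncomputable def charOfC {A : Type*} [AddCommGroup A] (ψ : AddChar A ℂ) : AddChar A ℂˣ where
  toFun a := (ψ.val_isUnit a).unit
  map_zero_eq_one' := by ext; simp
  map_add_eq_mul' a b := by ext; simp [ψ.map_add_eq_mul]

@[simp] lemma charOfC_apply_coe {A : Type*} [AddCommGroup A] (ψ : AddChar A ℂ) (a : A) :
    ((charOfC ψ a : ℂˣ) : ℂ) = ψ a := rfl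

@[simp] lemma charToC_apply {A : Type*} [AddCommGroup A] (χ : AddChar A ℂˣ) (a : A) :
    charToC χ a = (χ a : ℂ) := rfl

lemma charOfC_toC {A : Type*} [AddCommGroup A] (χ : AddChar A ℂˣ) : charOfC (charToC χ) = χ := by
  exact AddChar.ext _ _ fun a => Units.ext rfl

@[simp] lemma charRSmul_apply {R : Type*} [Ring R] (r : R) (χ : AddChar R ℂˣ) (a : R) :
    charRSmul r χ a = χ (r * a) := rfl

@[simp] lemma charLSmul_apply {R : Type*} [Ring R] (s : R) (χ : AddChar R ℂˣ) (a : R) :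
    charLSmul s χ a = χ (a * s) := rfl

/-- Characters separate points. -/
lemma char_sep {R : Type*} [Ring R] [Fintype R] {r s : R}
    (h : ∀ χ : AddChar R ℂˣ, χ r = χ s) : r = s := by
  have key : ∀ ψ : AddChar R ℂ, ψ (r - s) = 1 := by
    intro ψ
    have hrs : ψ r = ψ s := by
      have := h (charOfC ψ)
      have := congrArg (Units.val) this
      simpa using this
    have hs : ψ s ≠ 0 := (ψ.val_isUnit s).ne_zero
    have : ψ (r - s) * ψ s = 1 * ψ s := by
      rw [← ψ.map_add_eq_mul, sub_add_cancel, hrs, one_mul]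
    exact mul_right_cancel₀ hs this
  exact sub_eq_zero.mp (AddChar.forall_apply_eq_zero.mp key)

/-- Every multiplicative functional on the ℂˣ-character group is evaluation at a point. -/
lemma eval_surj {R : Type*} [Ring R] [Fintype R] (e : AddChar R ℂˣ → ℂˣ)
    (he : ∀ χ ψ : AddChar R ℂˣ, e (χ * ψ) = e χ * e ψ) :
    ∃ r : R, ∀ χ : AddChar R ℂˣ, e χ = χ r := by
  have he1 : e 1 = 1 := by
    have h := he 1 1
    rw [mul_one (1 : AddChar R ℂˣ)] at h
    exact (left_eq_mul.mp h)
  have hofC_add : ∀ ψ φ : AddChar R ℂ, charOfC (ψ + φ) = charOfC ψ * charOfC φ := by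
    intro ψ φ
    refine AddChar.ext _ _ fun a => Units.ext ?_
    simp
  let E : AddChar (AddChar R ℂ) ℂ :=
    { toFun := fun ψ => ((e (charOfC ψ) : ℂˣ) : ℂ)
      map_zero_eq_one' := by
        have h0 : charOfC (0 : AddChar R ℂ) = 1 := by
          refine AddChar.ext _ _ fun a => Units.ext ?_
          simp
        simp only [h0, he1, Units.val_one]
      map_add_eq_mul' := fun ψ φ => by
        simp only [hofC_add, he, Units.val_mul] }
  obtain ⟨r, hr⟩ := AddChar.doubleDualEmb_bijective.surjective E
  refine ⟨r, fun χ => ?_⟩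
  have := DFunLike.congr_fun hr (charToC χ)
  rw [AddChar.doubleDualEmb_apply] at this
  have : ((χ r : ℂˣ) : ℂ) = ((e χ : ℂˣ) : ℂ) := by
    simpa [E, charOfC_toC] using this
  exact (Units.ext this).symm

/-- For a finite ring `R`, the map `Θ : R → End(_R R̂)`, `Θ(r)(χ) = χ · r`, is an
isomorphism of rings (with multiplication on endomorphisms `f · g := g ∘ f`) and of right
`R`-modules.  Concretely: each `Θ(r)` is a left-`R`-linear endomorphism of `R̂`; `Θ` is
injective; every left-`R`-linear endomorphism of `R̂` equals `Θ(r)` for some `r`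
(uniqueness follows from injectivity); and `Θ` is additive, unital, and anti-multiplicative
with respect to composition, i.e. `Θ(r·s) = Θ(s) ∘ Θ(r)`. -/
theorem theta_ring_iso
    (R : Type*) [Ring R] [Fintype R] :
    (∀ (r : R) (χ ψ : AddChar R ℂˣ),
        charRSmul r (χ * ψ) = charRSmul r χ * charRSmul r ψ) ∧
    (∀ (r s : R) (χ : AddChar R ℂˣ),
        charRSmul r (charLSmul s χ) = charLSmul s (charRSmul r χ)) ∧
    Function.Injective (fun r : R => (charRSmul r : AddChar R ℂˣ → AddChar R ℂˣ)) ∧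
    (∀ f : AddChar R ℂˣ → AddChar R ℂˣ,
        (∀ χ ψ : AddChar R ℂˣ, f (χ * ψ) = f χ * f ψ) →
        (∀ (s : R) (χ : AddChar R ℂˣ), f (charLSmul s χ) = charLSmul s (f χ)) →
        ∃ r : R, f = charRSmul r) ∧
    (∀ r s : R, (charRSmul (r * s) : AddChar R ℂˣ → AddChar R ℂˣ) =
        charRSmul s ∘ charRSmul r) ∧
    (∀ (r s : R) (χ : AddChar R ℂˣ), charRSmul (r + s) χ = charRSmul r χ * charRSmul s χ) ∧
    (charRSmul (1 : R) : AddChar R ℂˣ → AddChar R ℂˣ) = id := by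
  refine ⟨?_, ?_, ?_, ?_, ?_, ?_, ?_⟩
  · intro r χ ψ
    exact AddChar.ext _ _ fun a => rfl
  · intro r s χ
    refine AddChar.ext _ _ fun a => ?_
    simp [mul_assoc]
  · intro r s h
    refine char_sep fun χ => ?_
    have := DFunLike.congr_fun (congrFun h χ) (1 : R)
    simpa using this
  · intro f hmul hlin
    obtain ⟨r, hr⟩ := eval_surj (fun χ => f χ 1) (fun χ ψ => by show f (χ * ψ) 1 = f χ 1 * f ψ 1; rw [hmul]; rfl)
    refine ⟨r, funext fun χ => AddChar.ext _ _ fun a => ?_⟩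
    have h1 := DFunLike.congr_fun (hlin a χ) (1 : R)
    have h2 := hr (charLSmul a χ)
    simp only [charLSmul_apply, one_mul] at h1
    simp only [charLSmul_apply] at h2
    rw [h1] at h2
    simpa using h2
  · intro r s
    funext χ
    refine AddChar.ext _ _ fun a => ?_
    simp [mul_assoc]
  · intro r s χ
    refine AddChar.ext _ _ fun a => ?_
    simp [add_mul, AddChar.map_add_eq_mul]
  · funext χ
    exact AddChar.ext _ _ fun a => by simp
end

section
/- Let R be a finite ring and M a finite left R-module. If v, w ∈ M generate the same cyclic submodule, Rv = Rw, then there exists a unit α ∈ R* with w = αv. -/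
open Function LinearMap

universe u v w

namespace BassAux

variable {R : Type v} [Ring R]

/-! ### Counting cancellation for finite modules -/

/-- Number of linear maps. -/
noncomputable def hc (R : Type v) [Ring R] (X : Type u) (Y : Type w) [AddCommGroup X]
    [Module R X] [AddCommGroup Y] [Module R Y] : ℕ := Nat.card (X →ₗ[R] Y)

/-- Number of injective linear maps. -/
noncomputable def ic (R : Type v) [Ring R] (X : Type u) (Y : Type w) [AddCommGroup X]
    [Module R X] [AddCommGroup Y] [Module R Y] : ℕ :=
  Nat.card {f : X →ₗ[R] Y // Injective f}

lemma nat_card_sigma {ι : Type*} [Fintype ι] (F : ι → Type*) [∀ i, Finite (F i)] :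
    Nat.card (Σ i, F i) = ∑ i, Nat.card (F i) := by
  letI : ∀ i, Fintype (F i) := fun i => Fintype.ofFinite _
  simp [Nat.card_eq_fintype_card, Fintype.card_sigma]

section counting

variable {X X' : Type u} {Y Y' : Type w} [AddCommGroup X] [Module R X]
  [AddCommGroup X'] [Module R X']
  [AddCommGroup Y] [Module R Y] [AddCommGroup Y'] [Module R Y']

instance finiteLinearMap [Finite X] [Finite Y] : Finite (X →ₗ[R] Y) :=
  Finite.of_injective _ DFunLike.coe_injective

lemma finite_submodule [Finite X] : Finite (Submodule R X) :=
  Finite.of_injective (fun K : Submodule R X => (K : Set X)) SetLike.coe_injective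

/-- The fiber of the kernel map over `K` is equivalent to injective maps from `X ⧸ K`. -/
noncomputable def fiberEquiv (K : Submodule R X) :
    {f : X →ₗ[R] Y // ker f = K} ≃ {g : (X ⧸ K) →ₗ[R] Y // Injective g} where
  toFun f := ⟨K.liftQ f.1 f.2.ge, by
    rw [← LinearMap.ker_eq_bot]
    exact Submodule.ker_liftQ_eq_bot _ _ _ f.2.le⟩
  invFun g := ⟨g.1.comp K.mkQ, by
    rw [LinearMap.ker_comp, LinearMap.ker_eq_bot.mpr g.2, Submodule.comap_bot,
      Submodule.ker_mkQ]⟩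
  left_inv f := Subtype.ext (Submodule.liftQ_mkQ _ _ _)
  right_inv g := Subtype.ext (Submodule.linearMap_qext _ (Submodule.liftQ_mkQ _ _ _))

lemma hc_eq_sum_ic [Finite X] [Finite Y] [Fintype (Submodule R X)] :
    hc R X Y = ∑ K : Submodule R X, ic R (X ⧸ K) Y := by
  have e1 : (X →ₗ[R] Y) ≃ Σ K : Submodule R X, {f : X →ₗ[R] Y // ker f = K} :=
    (Equiv.sigmaFiberEquiv (fun f : X →ₗ[R] Y => ker f)).symm
  rw [hc, Nat.card_congr e1, nat_card_sigma]
  exact Finset.sum_congr rfl fun K _ => Nat.card_congr (fiberEquiv K)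

lemma ic_congr_left (e : X ≃ₗ[R] X') : ic R X Y = ic R X' Y := by
  refine Nat.card_congr ⟨fun f => ⟨f.1.comp (e.symm : X' →ₗ[R] X), f.2.comp e.symm.injective⟩,
    fun g => ⟨g.1.comp (e : X →ₗ[R] X'), g.2.comp e.injective⟩, fun f => ?_, fun g => ?_⟩ <;>
  · apply Subtype.ext
    apply LinearMap.ext
    intro x
    simp

lemma hc_congr_right (e : Y ≃ₗ[R] Y') : hc R X Y = hc R X Y' := by
  refine Nat.card_congr ⟨fun f => (e : Y →ₗ[R] Y').comp f,
    fun g => (e.symm : Y' →ₗ[R] Y).comp g, fun f => ?_, fun g => ?_⟩ <;>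
  · apply LinearMap.ext
    intro x
    simp

lemma hc_prod : hc R X (Y × Y') = hc R X Y * hc R X Y' := by
  rw [hc, hc, hc, ← Nat.card_prod]
  exact Nat.card_congr
    ⟨fun f => ((fst R Y Y').comp f, (snd R Y Y').comp f),
     fun g => g.1.prod g.2,
     fun f => by apply LinearMap.ext; intro x; simp [LinearMap.prod],
     fun g => by
       apply Prod.ext <;> · apply LinearMap.ext; intro x; simp⟩

lemma hc_pos [Finite X] [Finite Y] : 0 < hc R X Y := by
  have : Nonempty (X →ₗ[R] Y) := ⟨0⟩
  exact Nat.card_pos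

end counting

section cancel

variable {B C : Type u} [AddCommGroup B] [Module R B] [AddCommGroup C] [Module R C]

lemma ic_eq_of_hc_eq [Finite B] [Finite C]
    (H : ∀ (X : Type u) [AddCommGroup X] [Module R X] [Finite X], hc R X B = hc R X C) :
    ∀ (n : ℕ) (Z : Type u) [AddCommGroup Z] [Module R Z] [Finite Z],
      Nat.card Z = n → ic R Z B = ic R Z C := by
  intro n
  induction n using Nat.strong_induction_on with
  | _ n IH =>
    intro Z _ _ _ hn
    letI : Fintype (Submodule R Z) := @Fintype.ofFinite _ finite_submodule
    letI : DecidableEq (Submodule R Z) := Classical.decEq _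
    have hsum_B := hc_eq_sum_ic (R := R) (X := Z) (Y := B)
    have hsum_C := hc_eq_sum_ic (R := R) (X := Z) (Y := C)
    have hbot : ∀ (Y : Type u) (_ : AddCommGroup Y) (_ : Module R Y),
        ic R (Z ⧸ (⊥ : Submodule R Z)) Y = ic R Z Y := by
      intro Y _ _
      exact ic_congr_left (Submodule.quotEquivOfEqBot ⊥ rfl)
    -- split off the ⊥ term
    have hsplit : ∀ (F : Submodule R Z → ℕ),
        ∑ K : Submodule R Z, F K = F ⊥ + ∑ K ∈ Finset.univ.erase ⊥, F K := by
      intro F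
      rw [add_comm, Finset.sum_erase_add]
      exact Finset.mem_univ _
    have hIH : ∀ K ∈ Finset.univ.erase (⊥ : Submodule R Z),
        ic R (Z ⧸ K) B = ic R (Z ⧸ K) C := by
      intro K hK
      have hKne : K ≠ ⊥ := (Finset.mem_erase.mp hK).1
      letI : Finite (Z ⧸ K) := Finite.of_surjective _ (Submodule.Quotient.mk_surjective K)
      have hcard : Nat.card Z = Nat.card (Z ⧸ K) * Nat.card K :=
        AddSubgroup.card_eq_card_quotient_mul_card_addSubgroup
          (K.toAddSubgroup : AddSubgroup Z)
      have hKcard : 1 < Nat.card K := by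
        rw [Finite.one_lt_card_iff_nontrivial]
        obtain ⟨x, hxK, hx⟩ := (Submodule.ne_bot_iff K).mp hKne
        exact ⟨⟨x, hxK⟩, 0, by simpa using hx⟩
      have hQpos : 0 < Nat.card (Z ⧸ K) := Nat.card_pos
      have hlt : Nat.card (Z ⧸ K) < n := by
        rw [← hn, hcard]
        exact (Nat.lt_mul_iff_one_lt_right hQpos).mpr hKcard
      exact IH _ hlt (Z ⧸ K) rfl
    have HZ := H Z
    rw [hsum_B, hsum_C, hsplit, hsplit] at HZ
    rw [Finset.sum_congr rfl hIH] at HZ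
    have h2 := Nat.add_right_cancel HZ
    rw [hbot B _ _, hbot C _ _] at h2
    exact h2

lemma equiv_of_hc_eq [Finite B] [Finite C]
    (H : ∀ (X : Type u) [AddCommGroup X] [Module R X] [Finite X], hc R X B = hc R X C) :
    Nonempty (B ≃ₗ[R] C) := by
  have h1 : ic R B B = ic R B C := ic_eq_of_hc_eq H (Nat.card B) B rfl
  have h2 : ic R C C = ic R C B := (ic_eq_of_hc_eq H (Nat.card C) C rfl).symm
  have hBB : 0 < ic R B B := by
    have : Nonempty {f : B →ₗ[R] B // Injective f} := ⟨⟨LinearMap.id, fun _ _ h => h⟩⟩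
    exact Nat.card_pos
  have hCC : 0 < ic R C C := by
    have : Nonempty {f : C →ₗ[R] C // Injective f} := ⟨⟨LinearMap.id, fun _ _ h => h⟩⟩
    exact Nat.card_pos
  rw [h1] at hBB
  rw [h2] at hCC
  obtain ⟨f, hf⟩ := (Nat.card_pos_iff.mp hBB).1.some
  obtain ⟨g, hg⟩ := (Nat.card_pos_iff.mp hCC).1.some
  have hcardle1 : Nat.card B ≤ Nat.card C := Nat.card_le_card_of_injective _ hf
  have hcardle2 : Nat.card C ≤ Nat.card B := Nat.card_le_card_of_injective _ hg
  have hbij : Bijective f := by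
    rw [Nat.bijective_iff_injective_and_card]
    exact ⟨hf, le_antisymm hcardle1 hcardle2⟩
  exact ⟨LinearEquiv.ofBijective f hbij⟩

end cancel

/-! ### Corner modules: `Re` as a submodule of `R` -/

/-- Right multiplication as a left-linear endomorphism. -/
def rmul (R : Type v) [Ring R] (e : R) : R →ₗ[R] R where
  toFun x := x * e
  map_add' x y := add_mul x y e
  map_smul' r x := by simp [smul_eq_mul, mul_assoc]

lemma mem_range_rmul_iff {e : R} (he : e * e = e) {x : R} :
    x ∈ range (rmul R e) ↔ x * e = x := by
  constructor
  · rintro ⟨y, rfl⟩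
    show y * e * e = y * e
    rw [mul_assoc, he]
  · intro hx
    exact ⟨x, hx⟩

lemma sub_idem {e : R} (he : e * e = e) : (1 - e) * (1 - e) = 1 - e := by
  rw [sub_mul, one_mul, mul_sub, mul_one, he]
  abel

/-- `R ≃ Re × R(1-e)` for an idempotent `e`. -/
noncomputable def cornerSplit {e : R} (he : e * e = e) :
    R ≃ₗ[R] (↥(range (rmul R e)) × ↥(range (rmul R (1 - e)))) where
  toFun x := (⟨x * e, ⟨x, rfl⟩⟩, ⟨x * (1 - e), ⟨x, rfl⟩⟩)
  map_add' x y := by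
    apply Prod.ext <;> · apply Subtype.ext; simp [add_mul]
  map_smul' r x := by
    apply Prod.ext <;> · apply Subtype.ext; simp [smul_eq_mul, mul_assoc]
  invFun p := (p.1 : R) + (p.2 : R)
  left_inv x := by
    show x * e + x * (1 - e) = x
    rw [mul_sub, mul_one]; abel
  right_inv p := by
    obtain ⟨⟨x, hx⟩, ⟨y, hy⟩⟩ := p
    rw [mem_range_rmul_iff he] at hx
    rw [mem_range_rmul_iff (sub_idem he)] at hy
    have hxe : x * (1 - e) = 0 := by
      rw [mul_sub, mul_one, hx, sub_self]
    have hye : y * e = 0 := by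
      calc y * e = y * (1 - e) * e := by rw [hy]
      _ = y * ((1 - e) * e) := by rw [mul_assoc]
      _ = 0 := by rw [sub_mul, one_mul, he, sub_self, mul_zero]
    apply Prod.ext <;> apply Subtype.ext
    · show (x + y) * e = x
      rw [add_mul, hye, add_zero, hx]
    · show (x + y) * (1 - e) = y
      rw [add_mul, hxe, zero_add, hy]

/-- `Re ≃ Rf` given appropriate intertwining elements. -/
noncomputable def cornerEquiv {e f p q : R} (hqf : q * f = q) (hpe : p * e = p)
    (hqp : q * p = e) (hpq : p * q = f) (he : e * e = e) (hf : f * f = f) :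
    (↥(range (rmul R e))) ≃ₗ[R] (↥(range (rmul R f))) where
  toFun x := ⟨(x : R) * q, (mem_range_rmul_iff hf).mpr (by rw [mul_assoc, hqf])⟩
  map_add' x y := by apply Subtype.ext; simp [add_mul]
  map_smul' r x := by apply Subtype.ext; simp [smul_eq_mul, mul_assoc]
  invFun y := ⟨(y : R) * p, (mem_range_rmul_iff he).mpr (by rw [mul_assoc, hpe])⟩
  left_inv x := by
    apply Subtype.ext
    show (x : R) * q * p = (x : R)
    rw [mul_assoc, hqp]
    exact (mem_range_rmul_iff he).mp x.2
  right_inv y := by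
    apply Subtype.ext
    show (y : R) * p * q = (y : R)
    rw [mul_assoc, hpq]
    exact (mem_range_rmul_iff hf).mp y.2

/-! ### Power stabilization in a finite monoid -/

lemma pow_stab {x : R} {m d : ℕ} (h : x ^ m = x ^ (m + d)) :
    ∀ j, m ≤ j → ∀ k, x ^ j = x ^ (j + k * d) := by
  have step : ∀ j, m ≤ j → x ^ j = x ^ (j + d) := by
    intro j hj
    obtain ⟨c, rfl⟩ := Nat.exists_eq_add_of_le hj
    rw [pow_add, h, ← pow_add]
    congr 1
    omega
  intro j hj k
  induction k with
  | zero => simp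
  | succ k ih =>
    have h2 := step (j + k * d) (le_trans hj (Nat.le_add_right _ _))
    rw [ih, h2]
    congr 1
    ring
  
lemma finite_exists_pow_period [Finite R] (x : R) :
    ∃ m d : ℕ, 0 < d ∧ x ^ m = x ^ (m + d) := by
  obtain ⟨i, j, hne, hij⟩ := Finite.exists_ne_map_eq_of_infinite (fun n : ℕ => x ^ n)
  rcases lt_or_gt_of_ne hne with hlt | hlt
  · exact ⟨i, j - i, by omega, by rw [hij]; congr 1; omega⟩
  · exact ⟨j, i - j, by omega, by rw [← hij]; congr 1; omega⟩

lemma shift_pow (a b : R) : ∀ k : ℕ, a * (b * a) ^ k = (a * b) ^ k * a := by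
  intro k
  induction k with
  | zero => simp
  | succ k ih =>
    rw [pow_succ, ← mul_assoc, ih, pow_succ]
    simp [mul_assoc]

lemma shift_pow' (a b : R) : ∀ k : ℕ, (b * a) ^ k * b = b * (a * b) ^ k := by
  intro k
  exact (shift_pow b a k).symm

/-- In a finite (Dedekind-finite) ring, a left inverse makes a unit. -/
lemma isUnit_of_left_inv [Finite R] {u y : R} (h : y * u = 1) : IsUnit u := by
  have hinj : Injective (fun x : R => u * x) := by
    intro x₁ x₂ hx
    have hx' : u * x₁ = u * x₂ := hx
    have : y * (u * x₁) = y * (u * x₂) := by rw [hx']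
    rwa [← mul_assoc, ← mul_assoc, h, one_mul, one_mul] at this
  obtain ⟨x, hx⟩ := (Finite.injective_iff_surjective.mp hinj) 1
  have hx'' : u * x = 1 := hx
  have hxy : x = y := by
    have : y * (u * x) = y := by rw [hx'', mul_one]
    rwa [← mul_assoc, h, one_mul] at this
  exact ⟨⟨u, x, hx'', by rw [hxy, h]⟩, rfl⟩

/-! ### The stable-range-one style key lemma -/

lemma exists_complement_unit [Fintype R] {e f p q : R}
    (he : e * e = e) (hf : f * f = f)
    (hpe : p * e = p) (hfp : f * p = p) (heq : e * q = q) (hqf : q * f = q)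
    (hqp : q * p = e) (hpq : p * q = f) :
    ∃ s : R, s * (1 - e) = s ∧ IsUnit (p + s) := by
  classical
  -- the two corner decompositions
  have equivAB := cornerSplit he
  have equivAC := cornerSplit hf
  have equivAA' := cornerEquiv hqf hpe hqp hpq he hf
  -- counting hypothesis
  have H : ∀ (X : Type _) [AddCommGroup X] [Module R X] [Finite X],
      hc R X (↥(range (rmul R (1 - e)))) = hc R X (↥(range (rmul R (1 - f)))) := by
    intro X _ _ _
    have h1 : hc R X (↥(range (rmul R e)) × ↥(range (rmul R (1 - e))))
        = hc R X (↥(range (rmul R f)) × ↥(range (rmul R (1 - f)))) :=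
      hc_congr_right (equivAB.symm.trans equivAC)
    rw [hc_prod, hc_prod] at h1
    rw [hc_congr_right equivAA'] at h1
    exact Nat.eq_of_mul_eq_mul_left (hc_pos) h1
  obtain ⟨φ⟩ := equiv_of_hc_eq H
  -- extract the intertwining elements
  have h1emem : (1 - e) ∈ range (rmul R (1 - e)) :=
    (mem_range_rmul_iff (sub_idem he)).mpr (sub_idem he)
  have h1fmem : (1 - f) ∈ range (rmul R (1 - f)) :=
    (mem_range_rmul_iff (sub_idem hf)).mpr (sub_idem hf)
  set t : R := (φ ⟨1 - e, h1emem⟩ : R) with ht_def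
  set s : R := (φ.symm ⟨1 - f, h1fmem⟩ : R) with hs_def
  have htf : t * (1 - f) = t := (mem_range_rmul_iff (sub_idem hf)).mp (φ ⟨1 - e, h1emem⟩).2
  have hse : s * (1 - e) = s := (mem_range_rmul_iff (sub_idem he)).mp (φ.symm ⟨1 - f, h1fmem⟩).2
  have hts : t * s = 1 - e := by
    have h1 : (↑(t • φ.symm ⟨1 - f, h1fmem⟩) : R) = t * s := by
      rw [SetLike.val_smul, smul_eq_mul]
    rw [← h1, ← map_smul]
    have h2 : t • (⟨1 - f, h1fmem⟩ : ↥(range (rmul R (1 - f)))) = φ ⟨1 - e, h1emem⟩ := by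
      apply Subtype.ext
      rw [SetLike.val_smul, smul_eq_mul]
      exact htf
    rw [h2, LinearEquiv.symm_apply_apply]
  -- now show p + s is a unit
  refine ⟨s, hse, ?_⟩
  have hsq : s * q = 0 := by
    calc s * q = s * (1 - e) * q := by rw [hse]
    _ = s * ((1 - e) * q) := by rw [mul_assoc]
    _ = 0 := by rw [sub_mul, one_mul, heq, sub_self, mul_zero]
  have htp : t * p = 0 := by
    calc t * p = t * (1 - f) * p := by rw [htf]
    _ = t * ((1 - f) * p) := by rw [mul_assoc]
    _ = 0 := by rw [sub_mul, one_mul, hfp, sub_self, mul_zero]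
  have h3 : (q + t) * (p + s) = 1 + q * s := by
    rw [add_mul, mul_add, mul_add, hqp, htp, hts, zero_add]
    abel
  have h4 : (q * s) * (q * s) = 0 := by
    rw [mul_assoc q s (q * s), ← mul_assoc s q s, hsq, zero_mul, mul_zero]
  have hleft : ((1 - q * s) * (q + t)) * (p + s) = 1 := by
    rw [mul_assoc, h3, mul_add, mul_one, sub_mul, one_mul, h4]
    abel
  exact isUnit_of_left_inv hleft

end BassAux

open BassAux Function LinearMap

/-- (Bass) Let `R` be a finite ring and `M` a finite left `R`-module.  If `v, w ∈ M`
generate the same cyclic submodule, `Rv = Rw`, then `w = α • v` for some unit `α ∈ R*`. -/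
theorem exists_unit_smul_of_span_eq
    (R : Type*) [Ring R] [Fintype R]
    (M : Type*) [AddCommGroup M] [Fintype M] [Module R M]
    (v w : M) (h : Submodule.span R {v} = Submodule.span R {w}) :
    ∃ α : Rˣ, w = (α : R) • v := by
  classical
  -- extract the multipliers
  have hw : w ∈ Submodule.span R {v} := h ▸ Submodule.mem_span_singleton_self w
  have hv : v ∈ Submodule.span R {w} := h ▸ Submodule.mem_span_singleton_self v
  obtain ⟨a, ha⟩ := Submodule.mem_span_singleton.mp hw   -- a • v = w
  obtain ⟨b, hb⟩ := Submodule.mem_span_singleton.mp hv   -- b • w = v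
  -- power stabilization
  obtain ⟨m₀, d, hd, hper⟩ := finite_exists_pow_period (a * b)
  have hshift : ∀ j : ℕ, (b * a) ^ (j + 1) = b * (a * b) ^ j * a := by
    intro j
    rw [pow_succ', mul_assoc, shift_pow a b j, ← mul_assoc]
  have hperx : (b * a) ^ (m₀ + 1) = (b * a) ^ ((m₀ + 1) + d) := by
    rw [show (m₀ + 1) + d = (m₀ + d) + 1 from by omega, hshift, hshift, hper]
  have hpx := pow_stab hperx
  have hpy := pow_stab hper
  set m := m₀ + 1 with hm_def
  set N := d * (m + 1) with hN_def
  have hNge : m + 1 ≤ N := by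
    calc m + 1 = 1 * (m + 1) := by ring
    _ ≤ d * (m + 1) := Nat.mul_le_mul_right _ hd
  have hdN : (m + 1) * d = N := by rw [hN_def, Nat.mul_comm]
  obtain ⟨n, hNn⟩ : ∃ n, N = n + 1 := ⟨N - 1, by omega⟩
  have hnm : m ≤ n := by omega
  -- the key power identities
  have hxNN : (b * a) ^ (N + N) = (b * a) ^ N := by
    have h := hpx N (by omega) (m + 1)
    conv_rhs => rw [h]
    congr 1
    omega
  have hyNN : (a * b) ^ (N + N) = (a * b) ^ N := by
    have h := hpy N (by omega) (m + 1)
    conv_rhs => rw [h]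
    congr 1
    omega
  have hxNn : (b * a) ^ (N + n) = (b * a) ^ n := by
    have h := hpx n hnm (m + 1)
    conv_rhs => rw [h]
    congr 1
    omega
  -- the cast of characters
  set e : R := (b * a) ^ N with he_def
  set f : R := (a * b) ^ N with hf_def
  set p : R := a * (b * a) ^ n with hp_def
  set q : R := b * (a * b) ^ N with hq_def
  have he : e * e = e := by rw [he_def, ← pow_add]; exact hxNN
  have hf : f * f = f := by rw [hf_def, ← pow_add]; exact hyNN
  have hpe : p * e = p := by
    rw [hp_def, he_def, mul_assoc, ← pow_add, show n + N = N + n from by omega, hxNn]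
  have hfp : f * p = p := by
    rw [hp_def, hf_def, ← mul_assoc, ← shift_pow, mul_assoc, ← pow_add, hxNn]
  have heq : e * q = q := by
    rw [hq_def, he_def, ← mul_assoc, shift_pow', mul_assoc, ← pow_add, hyNN]
  have hqf : q * f = q := by
    rw [hq_def, hf_def, mul_assoc, ← pow_add, hyNN]
  have hqp : q * p = e := by
    have haux : (a * b) ^ N * (a * (b * a) ^ n) = a * (b * a) ^ (N + n) := by
      rw [← mul_assoc, ← shift_pow, mul_assoc, ← pow_add]
    rw [hq_def, hp_def, mul_assoc, haux, ← mul_assoc, ← pow_succ', he_def,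
      show N + n + 1 = N + N from by omega, hxNN]
  have hpq : p * q = f := by
    have haux : (b * a) ^ n * (b * (a * b) ^ N) = b * (a * b) ^ (n + N) := by
      rw [← mul_assoc, shift_pow', mul_assoc, ← pow_add]
    rw [hp_def, hq_def, mul_assoc, haux, ← mul_assoc, ← pow_succ', hf_def,
      show n + N + 1 = N + N from by omega, hyNN]
  -- module facts
  have hbav : (b * a) • v = v := by rw [mul_smul, ha, hb]
  have hxkv : ∀ k : ℕ, ((b * a) ^ k) • v = v := by
    intro k
    induction k with
    | zero => simp
    | succ k ih => rw [pow_succ', mul_smul, ih, hbav]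
  have hev : e • v = v := by rw [he_def]; exact hxkv N
  have hpv : p • v = w := by rw [hp_def, mul_smul, hxkv n, ha]
  -- the unit
  obtain ⟨s, hse, hunit⟩ := exists_complement_unit he hf hpe hfp heq hqf hqp hpq
  obtain ⟨α, hα⟩ := hunit
  have h1ev : (1 - e) • v = 0 := by rw [sub_smul, one_smul, hev, sub_self]
  have hsv : s • v = 0 := by
    calc s • v = (s * (1 - e)) • v := by rw [hse]
    _ = s • ((1 - e) • v) := mul_smul _ _ _
    _ = 0 := by rw [h1ev, smul_zero]
  refine ⟨α, ?_⟩
  rw [hα, add_smul, hsv, add_zero, hpv]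
end

section
/- Let M be a finite Frobenius bimodule over a finite ring R and χ ∈ M̂. Then χ is a left generating character (i.e. R·χ = M̂) if and only if ker χ contains no nonzero left R-submodule of M. -/
open MulOpposite

/-- `χ` is a (two-sided) generating character of the finite `(R,R)`-bimodule `M`:
the map `r ↦ r·χ` (where `(r·χ)(v) = χ(v·r)`, using the right action of `R` on `M`)
and the map `r ↦ χ·r` (where `(χ·r)(v) = χ(r·v)`) are bijections from `R` onto the
character group `M̂`, i.e. `M̂` is free of rank one as a left and as a right `R`-module
with basis `χ`. -/
def IsGenChar (R M : Type*) [Ring R] [AddCommGroup M]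
    [Module R M] [Module Rᵐᵒᵖ M] (χ : AddChar M ℂˣ) : Prop :=
  (Function.Injective fun r : R => fun v : M => χ (op r • v)) ∧
  (∀ ψ : AddChar M ℂˣ, ∃ r : R, ∀ v : M, ψ v = χ (op r • v)) ∧
  (Function.Injective fun r : R => fun v : M => χ (r • v)) ∧
  (∀ ψ : AddChar M ℂˣ, ∃ r : R, ∀ v : M, ψ v = χ (r • v))

/-- `M` is a Frobenius bimodule over `R`: `_R M ≅ _R R̂` and `M_R ≅ R̂_R`, equivalently
the character bimodule `M̂` is free of rank one on each side, with a common generator. -/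
def IsFrobeniusBimodule (R M : Type*) [Ring R] [AddCommGroup M]
    [Module R M] [Module Rᵐᵒᵖ M] : Prop :=
  ∃ χ : AddChar M ℂˣ, IsGenChar R M χ

/-!
For a generating character `θ`, `r ↦ r·θ` is a bijection `R ≃ M̂`, so `r ↦ r·χ` is onto
exactly when it is one-to-one.  If `r·χ = s·χ`, then `M·(r - s)` is a left submodule inside
`ker χ`; when there is no nonzero such submodule, `r - s` annihilates `M` and hence vanishes.
Conversely, if `R·χ = M̂` then `χ = u·θ` with `u` a unit of `R`, so `χ·R = M̂` as well; a left
submodule `N ⊆ ker χ` is then killed by every character `χ·t`, hence `N = 0`.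
-/

open Function

lemma eq_zero_of_forall_addChar_apply_eq_one {M : Type*} [AddCommGroup M] [Finite M] {v : M}
    (h : ∀ ψ : AddChar M ℂˣ, ψ v = 1) : v = 0 := by
  by_contra hv
  have : NeZero (Monoid.exponent (Multiplicative M) : ℂ) :=
    ⟨by exact_mod_cast Monoid.exponent_ne_zero_of_finite⟩
  obtain ⟨φ, hφ⟩ := CommGroup.exists_apply_ne_one_of_hasEnoughRootsOfUnity
    (Multiplicative M) ℂ (a := Multiplicative.ofAdd v) (by simpa using hv)
  exact hφ (h (AddChar.toMonoidHomEquiv.symm φ))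

lemma eq_bot_of_forall_exists_smul {R M : Type*} [Ring R] [AddCommGroup M] [Finite M]
    [Module R M] {χ : AddChar M ℂˣ}
    (hχ : ∀ ψ : AddChar M ℂˣ, ∃ t : R, ∀ v : M, ψ v = χ (t • v))
    {N : Submodule R M} (hN : ∀ v ∈ N, χ v = 1) : N = ⊥ :=
  (Submodule.eq_bot_iff N).2 fun v hv => eq_zero_of_forall_addChar_apply_eq_one fun ψ => by
    obtain ⟨t, ht⟩ := hχ ψ
    rw [ht]
    exact hN _ (N.smul_mem t hv)

section

variable {R M : Type*} [Ring R] [AddCommGroup M] [Module Rᵐᵒᵖ M]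

/-- The paper's `r·χ`, namely `v ↦ χ(v r)`. -/
def charSMul (r : R) (χ : AddChar M ℂˣ) : AddChar M ℂˣ :=
  χ.compAddMonoidHom (DistribSMul.toAddMonoidHom M (op r))

lemma surjective_charSMul_iff {χ : AddChar M ℂˣ} :
    Surjective (charSMul · χ : R → AddChar M ℂˣ) ↔
      ∀ ψ : AddChar M ℂˣ, ∃ r : R, ∀ v : M, ψ v = χ (op r • v) := by
  refine forall_congr' fun ψ => exists_congr fun r => ?_
  rw [DFunLike.ext_iff]
  exact ⟨fun h v => (h v).symm, fun h v => (h v).symm⟩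

lemma injective_charSMul_of_ker [Module R M] [SMulCommClass R Rᵐᵒᵖ M] {χ : AddChar M ℂˣ}
    (hfaithful : ∀ t : R, (∀ v : M, op t • v = 0) → t = 0)
    (hker : ∀ N : Submodule R M, (∀ v ∈ N, χ v = 1) → N = ⊥) :
    Injective (charSMul · χ : R → AddChar M ℂˣ) := by
  intro r s h
  have := SMulCommClass.symm R Rᵐᵒᵖ M
  let f : M →ₗ[R] M := DistribSMul.toLinearMap R M (op (r - s))
  have hrange : LinearMap.range f = ⊥ := hker _ <| by
    rintro _ ⟨v, rfl⟩
    have hv : χ (op r • v) = χ (op s • v) := DFunLike.congr_fun h v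
    rw [DistribSMul.toLinearMap_apply, op_sub, sub_smul, AddChar.map_sub_eq_div, hv, div_self']
  exact sub_eq_zero.1 <| hfaithful _ (LinearMap.congr_fun (LinearMap.range_eq_bot.1 hrange))

namespace IsGenChar

variable [Module R M] {θ : AddChar M ℂˣ}

lemma bijective_charSMul (hθ : IsGenChar R M θ) : Bijective (charSMul · θ : R → AddChar M ℂˣ) :=
  ⟨fun _ _ h => hθ.1 (funext fun v => DFunLike.congr_fun h v), surjective_charSMul_iff.2 hθ.2.1⟩

lemma eq_zero_of_forall_op_smul_eq_zero (hθ : IsGenChar R M θ) {t : R}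
    (ht : ∀ v : M, op t • v = 0) : t = 0 :=
  hθ.1 <| funext fun v => by simp only [ht, op_zero, zero_smul]

lemma surjective_charSMul_of_injective [Finite R] (hθ : IsGenChar R M θ) {χ : AddChar M ℂˣ}
    (hχ : Injective (charSMul · χ : R → AddChar M ℂˣ)) :
    Surjective (charSMul · χ : R → AddChar M ℂˣ) :=
  (Finite.injective_iff_surjective_of_equiv (Equiv.ofBijective _ hθ.bijective_charSMul)).1 hχ

lemma exists_smul_of_left_generating [Finite R] [SMulCommClass R Rᵐᵒᵖ M]
    (hθ : IsGenChar R M θ) {χ : AddChar M ℂˣ}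
    (hχ : ∀ ψ : AddChar M ℂˣ, ∃ r : R, ∀ v : M, ψ v = χ (op r • v)) :
    ∀ ψ : AddChar M ℂˣ, ∃ t : R, ∀ v : M, ψ v = χ (t • v) := by
  obtain ⟨u, hu⟩ := hθ.2.1 χ
  obtain ⟨r, hr⟩ := hχ θ
  have hru : r * u = 1 := hθ.1 <| funext fun v => by
    simp only [op_mul, mul_smul, ← hu, ← hr, op_one, one_smul]
  have hur : u * r = 1 := mul_eq_one_symm hru
  intro ψ
  obtain ⟨t, ht⟩ := hθ.2.2.2 (charSMul r ψ)
  refine ⟨t, fun v => ?_⟩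
  calc ψ v = ψ (op r • op u • v) := by rw [← mul_smul, ← op_mul, hur, op_one, one_smul]
    _ = θ (t • op u • v) := ht _
    _ = θ (op u • t • v) := by rw [smul_comm]
    _ = χ (t • v) := (hu _).symm

end IsGenChar

end

/-- Let `M` be a finite Frobenius bimodule over a finite ring `R` and `χ ∈ M̂`.  Then `χ`
is a left generating character (`R·χ = M̂`) if and only if `ker χ` contains no nonzero
left `R`-submodule of `M`. -/
theorem left_generating_iff_ker_no_submodule
    (R M : Type*) [Ring R] [Fintype R] [AddCommGroup M] [Fintype M]
    [Module R M] [Module Rᵐᵒᵖ M] [SMulCommClass R Rᵐᵒᵖ M]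
    (hM : IsFrobeniusBimodule R M) (χ : AddChar M ℂˣ) :
    (∀ ψ : AddChar M ℂˣ, ∃ r : R, ∀ v : M, ψ v = χ (op r • v)) ↔
      (∀ N : Submodule R M, (∀ v ∈ N, χ v = 1) → N = ⊥) := by
  obtain ⟨θ, hθ⟩ := hM
  constructor
  · intro hχ N hN
    exact eq_bot_of_forall_exists_smul (hθ.exists_smul_of_left_generating hχ) hN
  · intro hker
    have hinj := injective_charSMul_of_ker (fun _ => hθ.eq_zero_of_forall_op_smul_eq_zero) hker
    exact surjective_charSMul_iff.1 (hθ.surjective_charSMul_of_injective hinj)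
end

section
/- Let M be a finite Frobenius bimodule over a finite ring R with generating character χ, and let V be any finite left R-module. Then the map Hom(_R V, _R M) → V̂ sending g to χ∘g is an injective group homomorphism. -/
open MulOpposite

lemma addChar_exists_ne_one {M : Type*} [AddCommGroup M] [Finite M] {m : M} (hm : m ≠ 0) :
    ∃ ψ : AddChar M ℂˣ, ψ m ≠ 1 := by
  have : NeZero (Monoid.exponent (Multiplicative M)) :=
    ⟨Monoid.exponent_ne_zero_of_finite⟩
  obtain ⟨φ, hφ⟩ := CommGroup.exists_apply_ne_one_of_hasEnoughRootsOfUnity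
    (G := Multiplicative M) (M := ℂ) (a := Multiplicative.ofAdd m) (by simpa using hm)
  exact ⟨AddChar.toMonoidHomEquiv.symm φ, hφ⟩

/-- Let `M` be a finite Frobenius bimodule over a finite ring `R` with generating
character `χ`, and `V` any finite left `R`-module.  The map
`Hom(_R V, _R M) → V̂`, `g ↦ χ ∘ g`, is an injective group homomorphism. -/
theorem charComp_injective_hom
    (R M : Type*) [Ring R] [Fintype R] [AddCommGroup M] [Fintype M]
    [Module R M] [Module Rᵐᵒᵖ M] [SMulCommClass R Rᵐᵒᵖ M]
    (χ : AddChar M ℂˣ) (hχ : IsGenChar R M χ)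
    (V : Type*) [AddCommGroup V] [Fintype V] [Module R V] :
    Function.Injective (fun g : V →ₗ[R] M => fun v : V => χ (g v)) ∧
      (∀ (g h : V →ₗ[R] M) (v : V), χ ((g + h) v) = χ (g v) * χ (h v)) := by
  obtain ⟨-, -, -, h4⟩ := hχ
  constructor
  · intro g h heq
    have key : ∀ v, χ ((g - h) v) = 1 := by
      intro v
      have h1 : χ (g v) = χ (h v) := congrFun heq v
      simp [AddChar.map_sub_eq_div, h1]
    ext v
    by_contra hne
    have hm : (g - h) v ≠ 0 := sub_ne_zero.mpr hne
    obtain ⟨ψ, hψ⟩ := addChar_exists_ne_one hm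
    obtain ⟨r, hr⟩ := h4 ψ
    apply hψ
    rw [hr, ← map_smul, key]
  · intro g h v
    simp [AddChar.map_add_eq_mul]
end

section
/- Let M be a finite Frobenius bimodule over a finite ring R. Then every left R-linear endomorphism of M is given by right multiplication by some element of R, i.e., the natural ring homomorphism σ : R → End(_R M), σ(r)(v) = vr, is bijective. -/
open MulOpposite

/-- Characters into ℂˣ separate points of a finite abelian group. -/
lemma exists_addChar_ne_one_aux (M : Type*) [AddCommGroup M] [Fintype M]
    {m : M} (hm : m ≠ 0) : ∃ ψ : AddChar M ℂˣ, ψ m ≠ 1 := by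
  have : NeZero ((Monoid.exponent (Multiplicative M) : ℕ) : ℂ) := by
    refine ⟨?_⟩
    exact_mod_cast Nat.cast_ne_zero.mpr
      (Monoid.exponent_ne_zero_of_finite (G := Multiplicative M))
  obtain ⟨φ, hφ⟩ := CommGroup.exists_apply_ne_one_of_hasEnoughRootsOfUnity
    (Multiplicative M) ℂ (a := Multiplicative.ofAdd m) (by simpa using hm)
  exact ⟨AddChar.toMonoidHomEquiv.symm φ, hφ⟩

/-- Let `M` be a finite Frobenius bimodule over a finite ring `R`.  Every left-`R`-linear
endomorphism of `M` is given by right multiplication by a unique element of `R`; i.e. the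
natural ring homomorphism `σ : R → End(_R M)`, `σ(r)(v) = v·r`, is bijective. -/
theorem every_left_endomorphism_is_right_mul
    (R M : Type*) [Ring R] [Fintype R] [AddCommGroup M] [Fintype M]
    [Module R M] [Module Rᵐᵒᵖ M] [SMulCommClass R Rᵐᵒᵖ M]
    (hM : IsFrobeniusBimodule R M) :
    ∀ f : M →ₗ[R] M, ∃! r : R, ∀ v : M, f v = op r • v := by
  obtain ⟨χ, hinjR, hsurjR, hinjL, hsurjL⟩ := hM
  intro f
  -- character v ↦ χ (f v)
  set ψ : AddChar M ℂˣ :=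
    { toFun := fun v => χ (f v)
      map_zero_eq_one' := by simp
      map_add_eq_mul' := by intro a b; simp [map_add, AddChar.map_add_eq_mul] } with hψ
  obtain ⟨r, hr⟩ := hsurjR ψ
  have hex : ∀ v : M, f v = op r • v := by
    intro v
    by_contra hne
    set m : M := f v - op r • v with hm
    have hm0 : m ≠ 0 := sub_ne_zero.mpr hne
    obtain ⟨ψ', hψ'⟩ := exists_addChar_ne_one_aux M hm0
    obtain ⟨s, hs⟩ := hsurjL ψ'
    apply hψ'
    rw [hs]
    have : s • m = f (s • v) - op r • (s • v) := by
      rw [hm, smul_sub, map_smul, smul_comm]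
    rw [this]
    have h1 : χ (f (s • v)) = χ (op r • (s • v)) := hr (s • v)
    have := AddChar.map_add_eq_mul χ (f (s • v) - op r • (s • v)) (op r • (s • v))
    rw [sub_add_cancel, h1] at this
    exact mul_right_cancel (this.symm.trans (one_mul _).symm)
  refine ⟨r, hex, fun r' hr' => ?_⟩
  apply hinjR
  funext v
  simp only []
  rw [← hr' v, ← hex v]
end

section
/- Let M be a finite Frobenius bimodule over a finite ring R. For every subset K of M that is a right R-submodule, the double annihilator satisfies (ᗮK)ᗮ = K, where ᗮK = {r ∈ R : rK = 0} and for an ideal I ⊆ R, Iᗮ = {v ∈ M : Iv = 0}. -/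
open MulOpposite

lemma exists_addChar_units_ne_one {A : Type*} [AddCommGroup A] [Finite A] {a : A}
    (ha : a ≠ 0) : ∃ ψ : AddChar A ℂˣ, ψ a ≠ 1 := by
  have h1 : NeZero (Monoid.exponent (Multiplicative A)) :=
    ⟨Monoid.exponent_ne_zero_of_finite⟩
  obtain ⟨φ, hφ⟩ := CommGroup.exists_apply_ne_one_of_hasEnoughRootsOfUnity
    (Multiplicative A) ℂ (a := Multiplicative.ofAdd a) (by simpa using ha)
  exact ⟨AddChar.toMonoidHomEquiv.symm φ, by simpa using hφ⟩

lemma eq_zero_of_forall_addChar {A : Type*} [AddCommGroup A] [Finite A] {a : A}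
    (h : ∀ ψ : AddChar A ℂˣ, ψ a = 1) : a = 0 := by
  by_contra ha
  obtain ⟨ψ, hψ⟩ := exists_addChar_units_ne_one ha
  exact hψ (h ψ)

/-- Double annihilator property: for a finite Frobenius bimodule `M` over a finite ring
`R` and any right `R`-submodule `K` of `M`, one has `(ᗮK)ᗮ = K`, where
`ᗮK = {r ∈ R : rK = 0}` and `Iᗮ = {v ∈ M : Iv = 0}`. -/
theorem double_annihilator_right_submodule
    (R M : Type*) [Ring R] [Fintype R] [AddCommGroup M] [Fintype M]
    [Module R M] [Module Rᵐᵒᵖ M] [SMulCommClass R Rᵐᵒᵖ M]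
    (hM : IsFrobeniusBimodule R M) (K : Submodule Rᵐᵒᵖ M) :
    {v : M | ∀ r : R, (∀ k ∈ K, r • k = 0) → r • v = 0} = (K : Set M) := by
  obtain ⟨χ, _, hleft_surj, _, hsurj⟩ := hM
  ext v
  simp only [Set.mem_setOf_eq, SetLike.mem_coe]
  constructor
  · intro hv
    by_contra hvK
    -- find a character of M trivial on K but not at v
    have hq : ((QuotientAddGroup.mk' K.toAddSubgroup) v : M ⧸ K.toAddSubgroup) ≠ 0 := by
      simpa [QuotientAddGroup.eq_zero_iff] using hvK
    obtain ⟨ψ', hψ'⟩ := exists_addChar_units_ne_one hq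
    set ψ : AddChar M ℂˣ := ψ'.compAddMonoidHom (QuotientAddGroup.mk' K.toAddSubgroup)
    have hψK : ∀ k ∈ K, ψ k = 1 := by
      intro k hk
      have : ((QuotientAddGroup.mk' K.toAddSubgroup) k : M ⧸ K.toAddSubgroup) = 0 :=
        (QuotientAddGroup.eq_zero_iff _).mpr hk
      simp [ψ, this]
    obtain ⟨r, hr⟩ := hsurj ψ
    have hrK : ∀ k ∈ K, r • k = 0 := by
      intro k hk
      apply eq_zero_of_forall_addChar
      intro θ
      obtain ⟨s, hs⟩ := hleft_surj θ
      have hcomm : op s • r • k = r • (op s • k) := smul_comm r (op s) k |>.symm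
      rw [hs, hcomm, ← hr, hψK _ (K.smul_mem (op s) hk)]
    have : ψ v = 1 := by rw [hr, hv r hrK, AddChar.map_zero_eq_one]
    exact hψ' this
  · intro hvK r hr
    exact hr v hvK
end

section
/- Let M be a finite Frobenius bimodule over a finite ring R with generating character χ, C ⊆ M^n a left R-submodule, U ≤ GL_n(R) a subgroup, and f : C → M^n a left R-linear map such that for each x ∈ C there is U_x ∈ U with f(x) = x U_x. Then for every r ∈ R^n there exists A_r ∈ U such that ⟨f(x), r⟩ = x A_r rᵀ for all x ∈ C. -/
open MulOpposite

/-- If `χ` is a generating character, then `χ(R·m) = 1` forces `m = 0`. -/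
private lemma gen_sep {R M : Type*} [Ring R] [AddCommGroup M] [Finite M]
    [Module R M] [Module Rᵐᵒᵖ M]
    (χ : AddChar M ℂˣ) (hχ : IsGenChar R M χ) (m : M)
    (h : ∀ c : R, χ (c • m) = 1) : m = 0 := by
  by_contra hm
  have ha : (Multiplicative.ofAdd m) ≠ (1 : Multiplicative M) := by
    simpa [← ofAdd_zero] using hm
  have : NeZero (Monoid.exponent (Multiplicative M)) :=
    ⟨Monoid.exponent_ne_zero_of_finite⟩
  obtain ⟨φ, hφ⟩ := CommGroup.exists_apply_ne_one_of_hasEnoughRootsOfUnity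
    (G := Multiplicative M) (M := ℂ) ha
  obtain ⟨c, hc⟩ := hχ.2.2.2 (AddChar.toMonoidHomEquiv.symm φ)
  apply hφ
  have := hc m
  simpa [h c] using this

/-- The `ℂ`-valued additive character `x ↦ χ(g x)` attached to an additive map `g`. -/
private def pairChar {M A : Type*} [AddCommGroup M] [AddCommGroup A]
    (χ : AddChar M ℂˣ) (g : A →+ M) : AddChar A ℂ where
  toFun x := ((χ (g x) : ℂˣ) : ℂ)
  map_zero_eq_one' := by simp
  map_add_eq_mul' a b := by
    simp only [map_add, AddChar.map_add_eq_mul, Units.val_mul]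

private lemma pairChar_apply {M A : Type*} [AddCommGroup M] [AddCommGroup A]
    (χ : AddChar M ℂˣ) (g : A →+ M) (x : A) :
    pairChar χ g x = ((χ (g x) : ℂˣ) : ℂ) := rfl

private lemma pairChar_eq_zero {M A : Type*} [AddCommGroup M] [AddCommGroup A]
    (χ : AddChar M ℂˣ) (g : A →+ M) (h : ∀ x, g x = 0) : pairChar χ g = 0 := by
  ext x
  simp [pairChar_apply, h x]

private lemma pairChar_eq_zero_iff {M A : Type*} [AddCommGroup M] [AddCommGroup A]
    (χ : AddChar M ℂˣ) (g : A →+ M) : pairChar χ g = 0 ↔ ∀ x, χ (g x) = 1 := by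
  constructor
  · intro h x
    have := congrFun (congrArg (DFunLike.coe) h) x
    rw [pairChar_apply, AddChar.zero_apply] at this
    exact_mod_cast Units.ext this
  · intro h; ext x; simp [pairChar_apply, h x]

/-- Moving a matrix across the pairing. -/
private lemma pair_step {R M : Type*} [Ring R] [AddCommGroup M] [Module Rᵐᵒᵖ M]
    {n : ℕ} (U : Matrix (Fin n) (Fin n) R) (s : Fin n → R) (x y : Fin n → M)
    (hy : ∀ j, y j = ∑ i, op (U i j) • x i) :
    ∑ j, op (s j) • y j = ∑ i, op (∑ j, U i j * s j) • x i := by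
  calc ∑ j, op (s j) • y j = ∑ j, ∑ i, op (s j) • op (U i j) • x i := by
        simp [hy, Finset.smul_sum]
    _ = ∑ i, ∑ j, op (U i j * s j) • x i := by
        rw [Finset.sum_comm]
        simp [op_mul, mul_smul]
    _ = ∑ i, op (∑ j, U i j * s j) • x i := by
        refine Finset.sum_congr rfl fun i _ => ?_
        rw [show (op (∑ j, U i j * s j) : Rᵐᵒᵖ) = ∑ j, op (U i j * s j) from
          map_sum (opAddEquiv : R ≃+ Rᵐᵒᵖ) _ _, Finset.sum_smul]

private lemma matrix_assoc {R : Type*} [Ring R] {n : ℕ}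
    (U B : Matrix (Fin n) (Fin n) R) (r : Fin n → R) (i : Fin n) :
    ∑ j, (U * B) i j * r j = ∑ j, U i j * (∑ k, B j k * r k) := by
  simp only [Matrix.mul_apply, Finset.sum_mul, Finset.mul_sum, mul_assoc]
  rw [Finset.sum_comm]

set_option maxHeartbeats 1000000 in
/-- Let `M` be a finite Frobenius bimodule over a finite ring `R` with generating
character `χ`, `C ⊆ M^n` a left `R`-submodule, `𝒰 ≤ GL_n(R)` a subgroup, and
`f : C → M^n` a left `R`-linear map such that for each `x ∈ C` there is `U_x ∈ 𝒰` with
`f(x) = x U_x`.  Then for every `r ∈ R^n` there exists `A_r ∈ 𝒰` with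
`⟨f(x), r⟩ = x A_r rᵀ` for all `x ∈ C`. -/
theorem exists_global_matrix_for_pairing
    (R M : Type*) [Ring R] [Fintype R] [AddCommGroup M] [Fintype M]
    [Module R M] [Module Rᵐᵒᵖ M] [SMulCommClass R Rᵐᵒᵖ M]
    (χ : AddChar M ℂˣ) (hχ : IsGenChar R M χ)
    (n : ℕ) (C : Submodule R (Fin n → M)) (𝒰 : Subgroup (Matrix (Fin n) (Fin n) R)ˣ)
    (f : C →ₗ[R] (Fin n → M))
    (hf : ∀ x : C, ∃ U ∈ 𝒰, ∀ j : Fin n,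
        f x j = ∑ i : Fin n, op (U.val i j) • (x : Fin n → M) i) :
    ∀ r : Fin n → R, ∃ A ∈ 𝒰, ∀ x : C,
      ∑ i : Fin n, op (r i) • f x i =
        ∑ i : Fin n, op (∑ j : Fin n, A.val i j * r j) • (x : Fin n → M) i := by
  intro r
  classical
  by_contra hcon
  push_neg at hcon
  have : Fintype C := Fintype.ofFinite _
  have : Fintype 𝒰 := Fintype.ofFinite _
  have : Nonempty C := ⟨0⟩
  -- the difference maps
  let g : (Matrix (Fin n) (Fin n) R)ˣ → (C →+ M) := fun A => AddMonoidHom.mk'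
    (fun x => (∑ i, op (r i) • f x i)
      - ∑ i, op (∑ j, A.val i j * r j) • (x : Fin n → M) i)
    (fun x y => by
      simp only [map_add, Pi.add_apply, Submodule.coe_add, smul_add,
        Finset.sum_add_distrib]
      abel)
  let w : (Matrix (Fin n) (Fin n) R)ˣ → (C →+ M) := fun B => AddMonoidHom.mk'
    (fun x => (∑ i, op (r i) • f x i) - ∑ i, op (∑ j, B.val i j * r j) • f x i)
    (fun x y => by
      simp only [map_add, Pi.add_apply, smul_add, Finset.sum_add_distrib]
      abel)
  have hg_apply : ∀ A x, g A x = (∑ i, op (r i) • f x i)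
      - ∑ i, op (∑ j, A.val i j * r j) • (x : Fin n → M) i := fun A x => rfl
  have hw_apply : ∀ B x, w B x = (∑ i, op (r i) • f x i)
      - ∑ i, op (∑ j, B.val i j * r j) • f x i := fun B x => rfl
  -- R-equivariance of g A
  have hg_smul : ∀ A (c : R) (x : C), g A (c • x) = c • g A x := by
    intro A c x
    rw [hg_apply, hg_apply, smul_sub]
    congr 1
    · rw [Finset.smul_sum]
      refine Finset.sum_congr rfl fun i _ => ?_
      rw [map_smul, Pi.smul_apply]
      exact (smul_comm c (op (r i)) (f x i)).symm
    · rw [Finset.smul_sum]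
      refine Finset.sum_congr rfl fun i _ => ?_
      rw [Submodule.coe_smul, Pi.smul_apply]
      exact (smul_comm c (op (∑ j, A.val i j * r j)) _).symm
  -- every inner sum over C vanishes
  have hT : ∀ A : 𝒰, ∑ x : C, pairChar χ (g A.val) x = 0 := by
    intro A
    rw [AddChar.sum_eq_ite, if_neg]
    intro h0
    have h1 : ∀ x : C, χ (g A.val x) = 1 := (pairChar_eq_zero_iff _ _).mp h0
    have h2 : ∀ x : C, g A.val x = 0 := by
      intro x
      refine gen_sep χ hχ _ (fun c => ?_)
      rw [← hg_smul A.val c x]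
      exact h1 _
    obtain ⟨x, hx⟩ := hcon A.val A.2
    apply hx
    have := h2 x
    rw [hg_apply, sub_eq_zero] at this
    exact this
  -- reindexing for a fixed x, using the local matrix from hf
  have hgw : ∀ x : C, ∑ A : 𝒰, pairChar χ (g A.val) x
      = ∑ B : 𝒰, pairChar χ (w B.val) x := by
    intro x
    obtain ⟨U, hU, hUx⟩ := hf x
    rw [← Equiv.sum_comp (Equiv.mulLeft (⟨U, hU⟩ : 𝒰))
      (fun A : 𝒰 => pairChar χ (g A.val) x)]
    refine Finset.sum_congr rfl fun B _ => ?_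
    simp only [Equiv.coe_mulLeft]
    rw [pairChar_apply, pairChar_apply]
    congr 2
    rw [hg_apply, hw_apply]
    congr 1
    rw [pair_step U.val (fun j => ∑ k, B.val.val j k * r k)
      (x : Fin n → M) (f x) hUx]
    refine Finset.sum_congr rfl fun i _ => ?_
    congr 1
    refine congrArg op ?_
    have hval : ((⟨U, hU⟩ : 𝒰) * B).val.val = U.val * B.val.val := by
      simp
    rw [hval]
    exact matrix_assoc U.val B.val.val r i
  -- compute the double sum in two ways
  have hS : (0 : ℂ) = ∑ B : 𝒰, ∑ x : C, pairChar χ (w B.val) x := by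
    calc (0 : ℂ) = ∑ A : 𝒰, ∑ x : C, pairChar χ (g A.val) x := by simp [hT]
      _ = ∑ x : C, ∑ A : 𝒰, pairChar χ (g A.val) x := Finset.sum_comm
      _ = ∑ x : C, ∑ B : 𝒰, pairChar χ (w B.val) x :=
          Finset.sum_congr rfl fun x _ => hgw x
      _ = ∑ B : 𝒰, ∑ x : C, pairChar χ (w B.val) x := Finset.sum_comm
  -- each term on the right is a nonnegative integer
  have hpos : ∑ B : 𝒰, ∑ x : C, pairChar χ (w B.val) x
      = ((∑ B : 𝒰, if pairChar χ (w B.val) = 0 then Fintype.card C else 0 : ℕ) : ℂ) := by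
    push_cast
    refine Finset.sum_congr rfl fun B _ => ?_
    rw [AddChar.sum_eq_ite]
    try simp [Finset.card_univ]
  -- the term at B = 1 is |C| > 0
  have hw1 : pairChar χ (w (1 : 𝒰).val) = 0 := by
    apply pairChar_eq_zero
    intro x
    rw [hw_apply, sub_eq_zero]
    refine Finset.sum_congr rfl fun i _ => ?_
    congr 1
    refine congrArg op ?_
    simp [Matrix.one_apply]
  have hne : (∑ B : 𝒰, if pairChar χ (w B.val) = 0 then Fintype.card C else 0) ≠ 0 := by
    intro h
    have h1 := (Finset.sum_eq_zero_iff).1 h (1 : 𝒰) (Finset.mem_univ _)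
    rw [if_pos hw1] at h1
    exact Fintype.card_ne_zero h1
  apply hne
  exact_mod_cast (hS.trans hpos).symm
end

section
/- Let M be a finite Frobenius bimodule over a finite ring R, C a left R-submodule of M^n, and f : C → M^n an injective left R-linear map. Then f extends to a left R-linear automorphism of M^n; equivalently, there exists U ∈ GL_n(R) with f(x) = xU for all x ∈ C. -/
open MulOpposite

/-!
A generating character `χ` identifies `Hom_R(A, M)` with the character group of any finite left
`R`-module `A`, via `g ↦ χ ∘ g`. Characters of finite abelian groups extend from subgroups, so
every linear map from a submodule of `A` to `M` extends to `A`; in particular `Mⁿ` is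
quasi-injective.

In a finite quasi-injective module `X`, an injective `f : C → X` extends to an automorphism.
Extend `f` to some `g : X → X`. If `g` is not injective, an atom `K ≤ ker g` is disjoint from `C`,
and there is a map `θ : K → X` whose image avoids `f(C)`; then `f ⊕ θ` is an injective map on the
strictly larger submodule `C ⊕ K`, and we conclude by induction on `C`.

The right half of the generating-character condition says that `Rᵐᵒᵖ ≅ End_R(M)` by right
multiplication, hence `Mₙ(R) ≅ End_R(Mⁿ)ᵐᵒᵖ`, and the automorphism is right multiplication by an
invertible matrix.
-/

open Function LinearMap

namespace AddChar

variable {G : Type*} [AddCommGroup G] [Finite G]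

instance : HasEnoughRootsOfUnity ℂ (Monoid.exponent (Multiplicative G)) :=
  have : NeZero (Monoid.exponent (Multiplicative G)) := ⟨Monoid.exponent_ne_zero_of_finite⟩
  inferInstance

variable (G) in
lemma card_units_complex : Nat.card (AddChar G ℂˣ) = Nat.card G :=
  (Nat.card_congr toMonoidHomEquiv).trans
    (CommGroup.card_monoidHom_of_hasEnoughRootsOfUnity (Multiplicative G) ℂ)

instance : Finite (AddChar G ℂˣ) :=
  Nat.finite_of_card_ne_zero ((card_units_complex G).symm ▸ Nat.card_pos.ne')

lemma eq_zero_of_forall_apply_eq_one {a : G} (h : ∀ ψ : AddChar G ℂˣ, ψ a = 1) : a = 0 := by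
  by_contra ha
  obtain ⟨φ, hφ⟩ := CommGroup.exists_apply_ne_one_of_hasEnoughRootsOfUnity (Multiplicative G) ℂ
    (a := Multiplicative.ofAdd a) ha
  exact hφ (h (toMonoidHomEquiv.symm φ))

lemma exists_extension (H : AddSubgroup G) (φ : AddChar H ℂˣ) :
    ∃ ψ : AddChar G ℂˣ, ∀ h : H, ψ h = φ h := by
  -- `Multiplicative H` and `H.toSubgroup` are definitionally the same group
  obtain ⟨ψ, hψ⟩ := MonoidHom.domRestrict_surjective (M := ℂ) H.toSubgroup (toMonoidHom φ)
  exact ⟨toMonoidHomEquiv.symm ψ, fun h => DFunLike.congr_fun hψ h⟩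

end AddChar

def IsQuasiInjective (R X : Type*) [Ring R] [AddCommGroup X] [Module R X] : Prop :=
  ∀ (C : Submodule R X) (f : C →ₗ[R] X), ∃ g : X →ₗ[R] X, g ∘ₗ C.subtype = f

section QuasiInjective

variable {R X : Type*} [Ring R] [AddCommGroup X] [Module R X]

lemma LinearMap.injective_coprod_of_disjoint_range {M₁ M₂ : Type*} [AddCommGroup M₁]
    [Module R M₁] [AddCommGroup M₂] [Module R M₂] {f : M₁ →ₗ[R] X} {g : M₂ →ₗ[R] X}
    (hf : Injective f) (hg : Injective g) (hd : Disjoint (range f) (range g)) :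
    Injective (f.coprod g) := by
  rw [← ker_eq_bot, ker_coprod_of_disjoint_range f g hd, ker_eq_bot.2 hf, ker_eq_bot.2 hg,
    Submodule.prod_bot]

lemma exists_injective_extension_sup {C K : Submodule R X} (hCK : Disjoint C K)
    {f : C →ₗ[R] X} {θ : K →ₗ[R] X} (hf : Injective f) (hθ : Injective θ)
    (hd : Disjoint (range f) (range θ)) :
    ∃ f' : ↥(C ⊔ K) →ₗ[R] X, Injective f' ∧ f' ∘ₗ Submodule.inclusion le_sup_left = f := by
  have hinc : Injective (C.subtype.coprod K.subtype) :=
    injective_coprod_of_disjoint_range C.injective_subtype K.injective_subtype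
      (by simpa only [Submodule.range_subtype] using hCK)
  let e : (C × K) ≃ₗ[R] ↥(C ⊔ K) := (LinearEquiv.ofInjective _ hinc).trans
    (LinearEquiv.ofEq _ _ (by rw [range_coprod, Submodule.range_subtype, Submodule.range_subtype]))
  refine ⟨f.coprod θ ∘ₗ e.symm,
    (injective_coprod_of_disjoint_range hf hθ hd).comp e.symm.injective, ?_⟩
  ext c
  have : e.symm (Submodule.inclusion le_sup_left c) = (c, 0) :=
    e.symm_apply_eq.2 (Subtype.ext (by simp [e]))
  simp [this]

/-- If every `θ` landed in `range f`, then `θ ↦ f⁻¹ ∘ θ` would inject `Hom(K, X)` into the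
maps `K → X` with values in `C`; by finiteness `K.subtype` would be one of them. -/
lemma exists_range_not_le_range [Finite X] {C K : Submodule R X} (hKC : ¬ K ≤ C)
    {f : C →ₗ[R] X} (hf : Injective f) : ∃ θ : K →ₗ[R] X, ¬ range θ ≤ range f := by
  by_contra! hall
  let e := LinearEquiv.ofInjective f hf
  let T : (K →ₗ[R] X) → (K →ₗ[R] X) := fun θ =>
    C.subtype ∘ₗ e.symm.toLinearMap ∘ₗ θ.codRestrict (range f) fun k => hall θ ⟨k, rfl⟩
  have hT : Injective T := fun θ θ' h => LinearMap.ext fun k =>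
    congrArg Subtype.val (e.symm.injective (Subtype.ext (LinearMap.congr_fun h k)))
  have : Finite (K →ₗ[R] X) := Finite.of_injective _ DFunLike.coe_injective
  obtain ⟨θ, hθ⟩ := Finite.injective_iff_surjective.1 hT K.subtype
  refine hKC fun k hk => ?_
  have hk' : T θ ⟨k, hk⟩ = k := LinearMap.congr_fun hθ ⟨k, hk⟩
  exact hk' ▸ (e.symm _).2

theorem IsQuasiInjective.exists_linearEquiv_extension [Finite X] (hX : IsQuasiInjective R X)
    (C : Submodule R X) (f : C →ₗ[R] X) (hf : Injective f) :
    ∃ g : X ≃ₗ[R] X, ∀ c : C, g c = f c := by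
  induction C using WellFoundedGT.induction with | _ C ih => ?_
  obtain ⟨g, rfl⟩ := hX C f
  by_cases hg : Injective g
  · exact ⟨.ofBijective g (Finite.injective_iff_bijective.1 hg), fun c => rfl⟩
  obtain ⟨K, hK, hKg⟩ := (eq_bot_or_exists_atom_le (ker g)).resolve_left (by rwa [ker_eq_bot])
  have hCK : Disjoint C K := (injective_domRestrict_iff.1 hf).mono_right hKg
  have : IsSimpleModule R K := isSimpleModule_iff_isAtom.2 hK
  obtain ⟨θ, hθ⟩ := exists_range_not_le_range (hK.not_le_iff_disjoint.2 hCK.symm) hf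
  have hθinj : Injective θ := θ.injective_or_eq_zero.resolve_right (by rintro rfl; simp at hθ)
  have hatom : IsAtom (range θ) :=
    isSimpleModule_iff_isAtom.1 (IsSimpleModule.congr (LinearEquiv.ofInjective θ hθinj).symm)
  obtain ⟨f', hf', hff'⟩ :=
    exists_injective_extension_sup hCK hf hθinj (hatom.not_le_iff_disjoint.1 hθ).symm
  obtain ⟨e, he⟩ := ih (C ⊔ K) (left_lt_sup.2 (hK.not_le_iff_disjoint.2 hCK.symm)) f' hf'
  exact ⟨e, fun c => (he _).trans (LinearMap.congr_fun hff' c)⟩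

end QuasiInjective

namespace IsGenChar

variable {R M : Type*} [Ring R] [AddCommGroup M] [Finite M] [Module R M] [Module Rᵐᵒᵖ M]
  {χ : AddChar M ℂˣ}

lemma eq_of_forall_smul (hχ : IsGenChar R M χ) {m m' : M}
    (h : ∀ r : R, χ (r • m) = χ (r • m')) : m = m' := by
  rw [← sub_eq_zero]
  refine AddChar.eq_zero_of_forall_apply_eq_one fun ψ => ?_
  obtain ⟨r, hr⟩ := hχ.2.2.2 ψ
  rw [hr, smul_sub, AddChar.map_sub_eq_div, h, div_self']

lemma card_eq (hχ : IsGenChar R M χ) : Nat.card M = Nat.card R := by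
  have hbij : Bijective fun r : R => χ.compAddMonoidHom (DistribSMul.toAddMonoidHom M r) :=
    ⟨fun r s h => hχ.2.2.1 (funext (DFunLike.congr_fun h)),
      fun ψ => (hχ.2.2.2 ψ).imp fun r hr => AddChar.ext _ _ fun v => (hr v).symm⟩
  rw [← AddChar.card_units_complex M, Nat.card_congr (Equiv.ofBijective _ hbij)]

lemma exists_smul_eq (hχ : IsGenChar R M χ) (ρ : AddChar R ℂˣ) :
    ∃ m : M, ∀ r : R, χ (r • m) = ρ r := by
  have : Finite R := Nat.finite_of_card_ne_zero (hχ.card_eq ▸ Nat.card_pos.ne')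
  let α : M → AddChar R ℂˣ := fun m => χ.compAddMonoidHom ((smulAddHom R M).flip m)
  have hα : Bijective α := by
    rw [Nat.bijective_iff_injective_and_card, AddChar.card_units_complex, hχ.card_eq]
    exact ⟨fun m m' h => hχ.eq_of_forall_smul (DFunLike.congr_fun h), rfl⟩
  obtain ⟨m, hm⟩ := hα.2 ρ
  exact ⟨m, DFunLike.congr_fun hm⟩

variable (A : Type*) [AddCommGroup A] [Module R A]

noncomputable def linearMapEquivAddChar (hχ : IsGenChar R M χ) :
    (A →ₗ[R] M) ≃ AddChar A ℂˣ :=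
  Equiv.ofBijective (fun g => χ.compAddMonoidHom g.toAddMonoidHom) <| by
    refine ⟨fun g g' h => LinearMap.ext fun a => hχ.eq_of_forall_smul fun r => ?_, fun ψ => ?_⟩
    · simpa using DFunLike.congr_fun h (r • a)
    · choose m hm using fun a => hχ.exists_smul_eq (ψ.compAddMonoidHom ((smulAddHom R A).flip a))
      refine ⟨{ toFun := m, map_add' := fun a b => ?_, map_smul' := fun s a => ?_ }, ?_⟩
      · refine hχ.eq_of_forall_smul fun r => ?_
        simp [hm, smul_add, AddChar.map_add_eq_mul]
      · refine hχ.eq_of_forall_smul fun r => ?_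
        simp [hm, smul_smul]
      · refine AddChar.ext _ _ fun a => ?_
        simpa using hm a 1

variable {A} in
lemma exists_extension [Finite A] (hχ : IsGenChar R M χ) (C : Submodule R A)
    (h : C →ₗ[R] M) : ∃ g : A →ₗ[R] M, g ∘ₗ C.subtype = h := by
  obtain ⟨ψ, hψ⟩ := AddChar.exists_extension C.toAddSubgroup (linearMapEquivAddChar C hχ h)
  obtain ⟨g, rfl⟩ := (linearMapEquivAddChar A hχ).surjective ψ
  exact ⟨g, (linearMapEquivAddChar C hχ).injective (AddChar.ext _ _ fun c => hψ c)⟩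

lemma isQuasiInjective_pi (hχ : IsGenChar R M χ) (ι : Type*) [Finite ι] :
    IsQuasiInjective R (ι → M) := fun C f => by
  choose g hg using fun i => hχ.exists_extension C (LinearMap.proj i ∘ₗ f)
  exact ⟨LinearMap.pi g, LinearMap.ext fun c => funext fun i => LinearMap.congr_fun (hg i) c⟩

lemma bijective_toModuleEnd [SMulCommClass Rᵐᵒᵖ R M] (hχ : IsGenChar R M χ) :
    Bijective (Module.toModuleEnd R (S := Rᵐᵒᵖ) M) := by
  refine ⟨fun r s h => unop_injective <| hχ.1 <| funext fun v => ?_, fun φ => ?_⟩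
  · simpa using congrArg χ (DFunLike.congr_fun h v)
  · obtain ⟨r, hr⟩ := hχ.2.1 (χ.compAddMonoidHom φ.toAddMonoidHom)
    exact ⟨op r, (linearMapEquivAddChar M hχ).injective (AddChar.ext _ _ fun v => (hr v).symm)⟩

end IsGenChar

section MatrixEnd

variable {R M : Type*} [Ring R] [AddCommGroup M] [Module R M] [Module Rᵐᵒᵖ M]
  [SMulCommClass Rᵐᵒᵖ R M] {ι : Type*} [Fintype ι] [DecidableEq ι]

noncomputable def matrixRingEquivEndPiMulOpposite
    (h : Bijective (Module.toModuleEnd R (S := Rᵐᵒᵖ) M)) :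
    Matrix ι ι R ≃+* (Module.End R (ι → M))ᵐᵒᵖ :=
  (RingEquiv.opOp _).trans <| RingEquiv.op <| RingEquiv.mopMatrix.symm.trans <|
    (RingEquiv.ofBijective _ h).mapMatrix.trans (endVecRingEquivMatrixEnd ι R M).symm

lemma matrixRingEquivEndPiMulOpposite_apply
    (h : Bijective (Module.toModuleEnd R (S := Rᵐᵒᵖ) M)) (A : Matrix ι ι R) (x : ι → M) (j : ι) :
    (matrixRingEquivEndPiMulOpposite h A).unop x j = ∑ i, op (A i j) • x i :=
  rfl

end MatrixEnd

theorem injective_extends_to_automorphism_general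
    (R M : Type*) [Ring R] [AddCommGroup M] [Fintype M]
    [Module R M] [Module Rᵐᵒᵖ M] [SMulCommClass R Rᵐᵒᵖ M]
    (hM : IsFrobeniusBimodule R M)
    (n : ℕ) (C : Submodule R (Fin n → M)) (f : C →ₗ[R] (Fin n → M))
    (hf : Function.Injective f) :
    ∃ U : (Matrix (Fin n) (Fin n) R)ˣ, ∀ x : C, ∀ j : Fin n,
      f x j = ∑ i : Fin n, op (U.val i j) • (x : Fin n → M) i := by
  have := SMulCommClass.symm R Rᵐᵒᵖ M
  obtain ⟨χ, hχ⟩ := hM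
  obtain ⟨g, hg⟩ := (hχ.isQuasiInjective_pi (Fin n)).exists_linearEquiv_extension C f hf
  have hbij := hχ.bijective_toModuleEnd
  obtain ⟨U, hU⟩ := ((Module.End.isUnit_iff g.toLinearMap).2 g.bijective).op.map
    (matrixRingEquivEndPiMulOpposite (ι := Fin n) hbij).symm
  refine ⟨U, fun x j => ?_⟩
  rw [← hg x, ← matrixRingEquivEndPiMulOpposite_apply hbij, hU, RingEquiv.apply_symm_apply]
  rfl

/-- Let `M` be a finite Frobenius bimodule over a finite ring `R`, `C ⊆ M^n` a left
`R`-submodule, and `f : C → M^n` an injective left `R`-linear map.  Then `f` extends to a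
left `R`-linear automorphism of `M^n`: there is `U ∈ GL_n(R)` with `f(x) = xU` for all
`x ∈ C`. -/
theorem injective_extends_to_automorphism
    (R M : Type*) [Ring R] [Fintype R] [AddCommGroup M] [Fintype M]
    [Module R M] [Module Rᵐᵒᵖ M] [SMulCommClass R Rᵐᵒᵖ M]
    (hM : IsFrobeniusBimodule R M)
    (n : ℕ) (C : Submodule R (Fin n → M)) (f : C →ₗ[R] (Fin n → M))
    (hf : Function.Injective f) :
    ∃ U : (Matrix (Fin n) (Fin n) R)ˣ, ∀ x : C, ∀ j : Fin n,
      f x j = ∑ i : Fin n, op (U.val i j) • (x : Fin n → M) i :=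
  injective_extends_to_automorphism_general R M hM n C f hf
end

section
/- Let M be a finite Frobenius bimodule over a finite ring R, f a left R-linear automorphism of M^n given by f(v) = vA for A ∈ M_n(R). Then f preserves the Rosenbloom–Tsfasman weight if and only if A is an invertible lower triangular matrix over R. -/
open MulOpposite

open Finset Classical in
/-- The Rosenbloom–Tsfasman weight of `v ∈ M^n`: `0` if `v = 0`, and `max{i : vᵢ ≠ 0}`
(with positions numbered `1,…,n`) otherwise. -/
noncomputable def rtWeight {M : Type*} [Zero M] {n : ℕ} (v : Fin n → M) : ℕ :=
  (Finset.univ.filter (fun i : Fin n => v i ≠ 0)).sup (fun i => i.1 + 1)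

/-! ### Auxiliary lemmas -/

section RT

variable {M₀ : Type*} [Zero M₀] {n : ℕ}

lemma le_rtWeight {v : Fin n → M₀} {j : Fin n} (h : v j ≠ 0) : j.1 + 1 ≤ rtWeight v := by
  classical
  unfold rtWeight
  exact Finset.le_sup (f := fun i : Fin n => i.1 + 1) (Finset.mem_filter.mpr ⟨Finset.mem_univ j, h⟩)

lemma rtWeight_le {v : Fin n → M₀} {k : ℕ} (h : ∀ j : Fin n, v j ≠ 0 → j.1 + 1 ≤ k) :
    rtWeight v ≤ k := by
  classical
  unfold rtWeight
  apply Finset.sup_le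
  intro j hj
  exact h j (Finset.mem_filter.mp hj).2

end RT

section Aux

variable {R M : Type*} [Ring R] [AddCommGroup M] [Module R M] [Module Rᵐᵒᵖ M]

lemma aux_op_sum {ι : Type*} (s : Finset ι) (g : ι → R) :
    op (∑ i ∈ s, g i) = ∑ i ∈ s, op (g i) :=
  map_sum (opAddEquiv : R ≃+ Rᵐᵒᵖ) g s

/-- Characters with values in `ℂˣ` separate the points of a finite abelian group. -/
lemma aux_char_sep [Finite M] {x : M} (h : ∀ ψ : AddChar M ℂˣ, ψ x = 1) : x = 0 := by
  by_contra hx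
  obtain ⟨ψ, hψ⟩ := AddChar.exists_apply_ne_zero.mpr hx
  have hu : ∀ a : M, ψ a * ψ (-a) = 1 := fun a => by
    rw [← AddChar.map_add_eq_mul, add_neg_cancel, AddChar.map_zero_eq_one]
  let ψ' : AddChar M ℂˣ :=
    { toFun := fun a => ⟨ψ a, ψ (-a), hu a, by rw [mul_comm]; exact hu a⟩
      map_zero_eq_one' := by ext; simp
      map_add_eq_mul' := fun a b => by ext; exact ψ.map_add_eq_mul a b }
  have h1 := h ψ'
  apply hψ
  have h2 : ((ψ' x : ℂˣ) : ℂ) = ((1 : ℂˣ) : ℂ) := by rw [h1]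
  simpa [ψ'] using h2

/-- The right action of `R` on a module with generating character is faithful. -/
lemma aux_faithful {χ : AddChar M ℂˣ} (hχ : IsGenChar R M χ) {s : R}
    (h : ∀ m : M, op s • m = 0) : s = 0 := by
  apply hχ.1
  funext v
  simp only [h v, op_zero, zero_smul]

/-- Every left `R`-linear endomorphism of a Frobenius bimodule is right multiplication
by some element of `R`. -/
lemma aux_endo_rep [Finite M] [SMulCommClass R Rᵐᵒᵖ M] {χ : AddChar M ℂˣ}
    (hχ : IsGenChar R M χ) (φ : M → M)
    (hadd : ∀ a b : M, φ (a + b) = φ a + φ b)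
    (hsm : ∀ (r : R) (m : M), φ (r • m) = r • φ m) :
    ∃ s : R, ∀ m : M, φ m = op s • m := by
  have h0 : φ 0 = 0 := by
    have h := hadd 0 0
    rw [add_zero] at h
    exact left_eq_add.mp h
  let ψφ : AddChar M ℂˣ :=
    { toFun := fun a => χ (φ a)
      map_zero_eq_one' := by show χ (φ 0) = 1; rw [h0, AddChar.map_zero_eq_one]
      map_add_eq_mul' := fun a b => by
        show χ (φ (a + b)) = χ (φ a) * χ (φ b)
        rw [hadd, AddChar.map_add_eq_mul] }
  obtain ⟨r, hr⟩ := hχ.2.1 ψφ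
  have key : ∀ w : M, χ (φ w - op r • w) = 1 := fun w => by
    rw [AddChar.map_sub_eq_div]
    exact div_eq_one.mpr (hr w)
  refine ⟨r, fun m => ?_⟩
  have sep : ∀ ψ : AddChar M ℂˣ, ψ (φ m - op r • m) = 1 := by
    intro ψ
    obtain ⟨s, hs⟩ := hχ.2.2.2 ψ
    rw [hs]
    have hcomm : s • (φ m - op r • m) = φ (s • m) - op r • (s • m) := by
      rw [smul_sub, ← hsm, smul_comm]
    rw [hcomm]
    exact key _
  exact sub_eq_zero.mp (aux_char_sep sep)

/-- If a matrix acts as the identity on `M^n`, it is the identity matrix. -/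
lemma aux_matrix_id [Finite M] {χ : AddChar M ℂˣ} (hχ : IsGenChar R M χ) {n : ℕ}
    (C : Matrix (Fin n) (Fin n) R)
    (h : ∀ (v : Fin n → M) (k : Fin n), ∑ i : Fin n, op (C i k) • v i = v k) :
    C = 1 := by
  ext i k
  have key : ∀ m : M, op (C i k) • m = (Pi.single i m : Fin n → M) k := by
    intro m
    have h2 := h (Pi.single i m) k
    rw [Finset.sum_eq_single i (fun j _ hji => by rw [Pi.single_eq_of_ne hji, smul_zero])
      (fun hi => absurd (Finset.mem_univ i) hi)] at h2
    rw [Pi.single_eq_same] at h2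
    rw [h2]
  have hz : ∀ m : M, op (C i k - (1 : Matrix (Fin n) (Fin n) R) i k) • m = 0 := by
    intro m
    rw [op_sub, sub_smul, key m]
    by_cases hik : i = k
    · subst hik
      rw [Matrix.one_apply_eq, Pi.single_eq_same, op_one, one_smul, sub_self]
    · rw [Matrix.one_apply_ne hik, Pi.single_eq_of_ne (Ne.symm hik), op_zero, zero_smul, sub_zero]
  have := aux_faithful hχ hz
  exact sub_eq_zero.mp this

/-- Composition of two matrix actions corresponds to the matrix product. -/
lemma aux_comp {n : ℕ} (C D : Matrix (Fin n) (Fin n) R) (v : Fin n → M) (k : Fin n) :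
    ∑ j : Fin n, op (D j k) • (∑ i : Fin n, op (C i j) • v i)
      = ∑ i : Fin n, op ((C * D) i k) • v i := by
  simp_rw [Finset.smul_sum, smul_smul, ← op_mul]
  rw [Finset.sum_comm]
  refine Finset.sum_congr rfl fun i _ => ?_
  rw [Matrix.mul_apply, aux_op_sum, Finset.sum_smul]

/-- A lower triangular matrix does not increase the RT weight. -/
lemma aux_tri_weight {n : ℕ} (C : Matrix (Fin n) (Fin n) R)
    (hC : ∀ i j : Fin n, i < j → C i j = 0) (v : Fin n → M) :
    rtWeight (fun k => ∑ i : Fin n, op (C i k) • v i) ≤ rtWeight v := by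
  apply rtWeight_le
  intro k hk
  obtain ⟨i, -, hi⟩ := Finset.exists_ne_zero_of_sum_ne_zero hk
  have hvi : v i ≠ 0 := fun h => hi (by rw [h, smul_zero])
  have hik : ¬ i < k := fun h => hi (by rw [hC i k h, op_zero, zero_smul])
  calc k.1 + 1 ≤ i.1 + 1 := by
        have : k ≤ i := not_lt.mp hik
        omega
    _ ≤ rtWeight v := le_rtWeight hvi

/-- The inverse of an invertible lower triangular matrix over a finite ring is
lower triangular. -/
lemma aux_inv_tri [Fintype R] {n : ℕ} {A : Matrix (Fin n) (Fin n) R} (hA : IsUnit A)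
    (hT : ∀ i j : Fin n, i < j → A i j = 0) :
    ∀ i j : Fin n, i < j → (hA.unit⁻¹).val i j = 0 := by
  classical
  have hAB : A * (hA.unit⁻¹).val = 1 := by
    have h := hA.unit.mul_inv
    rwa [IsUnit.unit_spec] at h
  have hBA : (hA.unit⁻¹).val * A = 1 := by
    have h := hA.unit.inv_mul
    rwa [IsUnit.unit_spec] at h
  set B : Matrix (Fin n) (Fin n) R := (hA.unit⁻¹).val with hB
  have hmul : ∀ C : Matrix (Fin n) (Fin n) R, (∀ i j : Fin n, i < j → C i j = 0) →
      ∀ i j : Fin n, i < j → (A * C) i j = 0 := by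
    intro C hCt i j hij
    rw [Matrix.mul_apply]
    apply Finset.sum_eq_zero
    intro k _
    rcases lt_or_ge i k with h2 | h2
    · rw [hT i k h2, zero_mul]
    · rw [hCt k j (lt_of_le_of_lt h2 hij), mul_zero]
  let L := {C : Matrix (Fin n) (Fin n) R // ∀ i j : Fin n, i < j → C i j = 0}
  let F : L → L := fun C => ⟨A * C.1, hmul C.1 C.2⟩
  have hFinj : Function.Injective F := by
    intro C D hCD
    have h1 : A * C.1 = A * D.1 := congrArg Subtype.val hCD
    have h2 : B * (A * C.1) = B * (A * D.1) := by rw [h1]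
    rw [← mul_assoc, ← mul_assoc, hBA, one_mul, one_mul] at h2
    exact Subtype.ext h2
  have hFsurj : Function.Surjective F := Finite.surjective_of_injective hFinj
  obtain ⟨C, hC⟩ := hFsurj ⟨1, fun i j hij => Matrix.one_apply_ne (ne_of_lt hij)⟩
  have hC1 : A * C.1 = 1 := congrArg Subtype.val hC
  have hBC : B = C.1 := by
    have : B * (A * C.1) = B * 1 := by rw [hC1]
    rw [← mul_assoc, hBA, one_mul, mul_one] at this
    exact this.symm
  rw [hBC]
  exact C.2

end Aux

/-- Let `M` be a finite Frobenius bimodule over a finite ring `R` and `f` a left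
`R`-linear automorphism of `M^n` given by `f(v) = vA` for a matrix `A ∈ M_n(R)`.  Then
`f` preserves the Rosenbloom–Tsfasman weight if and only if `A` is an invertible lower
triangular matrix over `R`. -/
theorem rt_isometry_iff_lower_triangular
    (R M : Type*) [Ring R] [Fintype R] [AddCommGroup M] [Fintype M]
    [Module R M] [Module Rᵐᵒᵖ M] [SMulCommClass R Rᵐᵒᵖ M]
    (hM : IsFrobeniusBimodule R M)
    (n : ℕ) (A : Matrix (Fin n) (Fin n) R) (f : (Fin n → M) →ₗ[R] (Fin n → M))
    (hfA : ∀ (v : Fin n → M) (j : Fin n), f v j = ∑ i : Fin n, op (A i j) • v i)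
    (hbij : Function.Bijective f) :
    (∀ v : Fin n → M, rtWeight (f v) = rtWeight v) ↔
      (IsUnit A ∧ ∀ i j : Fin n, i < j → A i j = 0) := by
  classical
  obtain ⟨χ, hχ⟩ := hM
  constructor
  · intro hW
    have hT : ∀ i j : Fin n, i < j → A i j = 0 := by
      intro i j hij
      apply aux_faithful hχ
      intro m
      by_cases hm : m = 0
      · rw [hm, smul_zero]
      · have hfj : f (Pi.single i m) j = op (A i j) • m := by
          rw [hfA]
          rw [Finset.sum_eq_single i (fun l _ hli => by rw [Pi.single_eq_of_ne hli, smul_zero])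
            (fun hi => absurd (Finset.mem_univ i) hi), Pi.single_eq_same]
        by_contra hne
        have hne' : f (Pi.single i m) j ≠ 0 := by rw [hfj]; exact hne
        have h1 : j.1 + 1 ≤ rtWeight (f (Pi.single i m)) := le_rtWeight hne'
        have h2 : rtWeight (Pi.single i m) ≤ i.1 + 1 := by
          apply rtWeight_le
          intro l hl
          rcases eq_or_ne l i with rfl | hli
          · exact le_refl _
          · rw [Pi.single_eq_of_ne hli] at hl
            exact absurd rfl hl
        rw [hW] at h1
        have := le_trans h1 h2
        have := hij
        omega
    refine ⟨?_, hT⟩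
    -- represent the inverse of `f` by a matrix `B`
    let e := LinearEquiv.ofBijective f hbij
    have hrep : ∀ i k : Fin n, ∃ s : R, ∀ m : M, e.symm (Pi.single i m) k = op s • m := by
      intro i k
      apply aux_endo_rep hχ (fun m => e.symm (Pi.single i m) k)
      · intro a b
        rw [Pi.single_add, map_add, Pi.add_apply]
      · intro r m
        rw [Pi.single_smul, map_smul, Pi.smul_apply]
    choose B hBrep using hrep
    have hg : ∀ (v : Fin n → M) (k : Fin n),
        e.symm v k = ∑ i : Fin n, op (B i k) • v i := by
      intro v k
      conv_lhs => rw [← Finset.univ_sum_single v]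
      rw [map_sum, Finset.sum_apply]
      exact Finset.sum_congr rfl fun i _ => hBrep i k (v i)
    have hAB : A * (Matrix.of B) = 1 := by
      apply aux_matrix_id hχ
      intro v k
      have h1 : ∀ j : Fin n, f v j = ∑ i : Fin n, op (A i j) • v i := hfA v
      calc ∑ i : Fin n, op ((A * Matrix.of B) i k) • v i
          = ∑ j : Fin n, op (B j k) • (∑ i : Fin n, op (A i j) • v i) :=
            (aux_comp A (Matrix.of B) v k).symm
        _ = ∑ j : Fin n, op (B j k) • f v j := by
            exact Finset.sum_congr rfl fun j _ => by rw [h1 j]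
        _ = e.symm (f v) k := (hg (f v) k).symm
        _ = v k := by
            have : e.symm (e v) = v := e.symm_apply_apply v
            exact congrFun this k
    have hBA : (Matrix.of B) * A = 1 := by
      apply aux_matrix_id hχ
      intro v k
      calc ∑ i : Fin n, op ((Matrix.of B * A) i k) • v i
          = ∑ j : Fin n, op (A j k) • (∑ i : Fin n, op (B i j) • v i) :=
            (aux_comp (Matrix.of B) A v k).symm
        _ = ∑ j : Fin n, op (A j k) • e.symm v j := by
            exact Finset.sum_congr rfl fun j _ => by rw [hg v j]
        _ = f (e.symm v) k := (hfA (e.symm v) k).symm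
        _ = v k := by
            have : e (e.symm v) = v := e.apply_symm_apply v
            exact congrFun this k
    exact (⟨⟨A, Matrix.of B, hAB, hBA⟩, rfl⟩ : IsUnit A)
  · rintro ⟨hA, hT⟩ v
    have hBT := aux_inv_tri hA hT
    have hAB : A * (hA.unit⁻¹).val = 1 := by
      have h := hA.unit.mul_inv
      rwa [IsUnit.unit_spec] at h
    set B : Matrix (Fin n) (Fin n) R := (hA.unit⁻¹).val with hBdef
    have hgf : ∀ k : Fin n, v k = ∑ j : Fin n, op (B j k) • f v j := by
      intro k
      have h1 : ∑ j : Fin n, op (B j k) • f v j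
          = ∑ j : Fin n, op (B j k) • (∑ i : Fin n, op (A i j) • v i) :=
        Finset.sum_congr rfl fun j _ => by rw [hfA v j]
      rw [h1, aux_comp A B v k, hAB]
      rw [Finset.sum_eq_single k (fun i _ hik => by
        rw [Matrix.one_apply_ne hik, op_zero, zero_smul])
        (fun hk => absurd (Finset.mem_univ k) hk)]
      rw [Matrix.one_apply_eq, op_one, one_smul]
    apply le_antisymm
    · have h1 : rtWeight (f v) = rtWeight (fun j => ∑ i : Fin n, op (A i j) • v i) := by
        congr 1
        funext j
        exact hfA v j
      rw [h1]
      exact aux_tri_weight A hT v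
    · have h2 : rtWeight v = rtWeight (fun k => ∑ j : Fin n, op (B j k) • f v j) := by
        congr 1
        funext k
        exact hgf k
      rw [h2]
      exact aux_tri_weight B hBT (f v)
end

section
/- Let 𝔽 ⊆ 𝔽̂ be a finite field extension, C an 𝔽-subspace of 𝔽̂^n, and f : C → 𝔽̂^n an 𝔽-linear map that preserves the Rosenbloom–Tsfasman weight. Then f extends to an RT-weight-preserving 𝔽-linear map on all of 𝔽̂^n. -/
section rtWeight

variable {M : Type*} [Zero M] {n : ℕ} {v : Fin n → M}

lemma rtWeight_le_iff {m : ℕ} : rtWeight v ≤ m ↔ ∀ i : Fin n, v i ≠ 0 → i.1 + 1 ≤ m := by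
  classical
  simp [rtWeight, Finset.sup_le_iff]

lemma succ_le_rtWeight {i : Fin n} (h : v i ≠ 0) : i.1 + 1 ≤ rtWeight v :=
  rtWeight_le_iff.mp le_rfl i h

lemma apply_eq_zero_of_rtWeight_le {i : Fin n} (h : rtWeight v ≤ i) : v i = 0 := by
  by_contra hi
  have := succ_le_rtWeight hi
  omega

lemma apply_eq_zero_iff_rtWeight_le {i : Fin n} (h : rtWeight v ≤ i + 1) :
    v i = 0 ↔ rtWeight v ≤ i := by
  refine ⟨fun hi => rtWeight_le_iff.mpr fun j hj => ?_, apply_eq_zero_of_rtWeight_le⟩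
  have hji : j ≠ i := by rintro rfl; exact hj hi
  have := rtWeight_le_iff.mp h j hj
  have : j.1 ≠ i.1 := Fin.val_ne_of_ne hji
  omega

lemma exists_rtWeight_eq_succ (hv : v ≠ 0) : ∃ i : Fin n, v i ≠ 0 ∧ rtWeight v = i.1 + 1 := by
  classical
  obtain ⟨k, hk⟩ := Function.ne_iff.mp hv
  obtain ⟨i, hi, hsup⟩ := Finset.exists_mem_eq_sup
    (Finset.univ.filter fun i : Fin n => v i ≠ 0) ⟨k, by simpa using hk⟩ (fun i => i.1 + 1)
  exact ⟨i, (Finset.mem_filter.mp hi).2, by rw [rtWeight]; convert hsup⟩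

lemma rtWeight_zero : rtWeight (0 : Fin n → M) = 0 := by
  simp [rtWeight]

end rtWeight

section LinearAlgebra

variable {F V W U : Type*} [Field F] [AddCommGroup V] [Module F V]
  [AddCommGroup W] [Module F W] [AddCommGroup U] [Module F U]

open LinearMap

lemma LinearMap.exists_comp_eq_of_ker_le {L : V →ₗ[F] W} {M : V →ₗ[F] U}
    (h : ker L ≤ ker M) : ∃ N : W →ₗ[F] U, N ∘ₗ L = M := by
  obtain ⟨p, hp⟩ := (range L).subtype.exists_leftInverse_of_injective (range L).ker_subtype
  refine ⟨(ker L).liftQ M h ∘ₗ L.quotKerEquivRange.symm.toLinearMap ∘ₗ p,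
    LinearMap.ext fun v => ?_⟩
  have hpL : p (L v) = ⟨L v, mem_range_self L v⟩ := LinearMap.congr_fun hp ⟨L v, _⟩
  simp [hpL, quotKerEquivRange_symm_apply_image]

lemma LinearMap.exists_linearEquiv_comp_eq_of_ker_eq [FiniteDimensional F W]
    {L M : V →ₗ[F] W} (h : ker L = ker M) : ∃ e : W ≃ₗ[F] W, e.toLinearMap ∘ₗ L = M := by
  let e₀ : range L ≃ₗ[F] range M :=
    L.quotKerEquivRange.symm ≪≫ₗ Submodule.quotEquivOfEq _ _ h ≪≫ₗ M.quotKerEquivRange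
  obtain ⟨e, he⟩ := Submodule.exists_linearEquiv_restrict_eq e₀
  refine ⟨e, LinearMap.ext fun v => ?_⟩
  have := he ⟨L v, mem_range_self L v⟩
  simp only [e₀, LinearEquiv.trans_apply, quotKerEquivRange_symm_apply_image] at this
  exact this.symm

end LinearAlgebra

section UpperTriangular

variable (R M : Type*) [Semiring R] [AddCommMonoid M] [Module R M] {n : ℕ}

def rtTail (i : Fin n) : (Fin n → M) →ₗ[R] ({j : Fin n // i < j} → M) :=
  LinearMap.funLeft R M Subtype.val

variable {R M}

lemma rtTail_eq_zero_iff {i : Fin n} {w : Fin n → M} :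
    rtTail R M i w = 0 ↔ rtWeight w ≤ i + 1 := by
  rw [rtWeight_le_iff, funext_iff]
  refine ⟨fun h j hj => ?_, fun h j => ?_⟩
  · by_contra hlt
    exact hj (h ⟨j, Fin.lt_def.mpr (by omega)⟩)
  · by_contra hj
    have := h j hj
    have := Fin.lt_def.mp j.2
    omega

def upperTriangular (ψ : Fin n → M →ₗ[R] M) (η : ∀ i, ({j : Fin n // i < j} → M) →ₗ[R] M) :
    (Fin n → M) →ₗ[R] (Fin n → M) :=
  LinearMap.pi fun i => ψ i ∘ₗ LinearMap.proj i + η i ∘ₗ rtTail R M i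

lemma upperTriangular_apply (ψ : Fin n → M →ₗ[R] M)
    (η : ∀ i, ({j : Fin n // i < j} → M) →ₗ[R] M) (w : Fin n → M) (i : Fin n) :
    upperTriangular ψ η w i = ψ i (w i) + η i (rtTail R M i w) :=
  rfl

lemma rtWeight_upperTriangular {ψ : Fin n → M →ₗ[R] M} (hψ : ∀ i, Function.Injective (ψ i))
    (η : ∀ i, ({j : Fin n // i < j} → M) →ₗ[R] M) (w : Fin n → M) :
    rtWeight (upperTriangular ψ η w) = rtWeight w := by
  refine le_antisymm (rtWeight_le_iff.mpr fun i hi => ?_) ?_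
  · by_contra! hw
    have hwi : w i = 0 := apply_eq_zero_of_rtWeight_le (by omega)
    have htail : rtTail R M i w = 0 := rtTail_eq_zero_iff.mpr (by omega)
    simp [upperTriangular_apply, hwi, htail] at hi
  · rcases eq_or_ne w 0 with rfl | hw
    · simp [rtWeight_zero]
    obtain ⟨i, hwi, hweight⟩ := exists_rtWeight_eq_succ hw
    have htail : rtTail R M i w = 0 := rtTail_eq_zero_iff.mpr hweight.le
    have hgi : upperTriangular ψ η w i ≠ 0 := by
      rw [upperTriangular_apply, htail, map_zero, add_zero]
      exact (map_ne_zero_iff _ (hψ i)).mpr hwi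
    exact hweight ▸ succ_le_rtWeight hgi

end UpperTriangular

section Extension

variable {F V : Type*} [Field F] [AddCommGroup V] [Module F V] {n : ℕ}
  {C : Submodule F (Fin n → V)} {f : C →ₗ[F] (Fin n → V)}

open LinearMap

lemma exists_linearEquiv_apply_eq_of_rtWeight_le [FiniteDimensional F V]
    (hf : ∀ v : C, rtWeight (f v) = rtWeight (v : Fin n → V)) (i : Fin n) :
    ∃ ψ : V ≃ₗ[F] V, ∀ v : C, rtWeight (v : Fin n → V) ≤ i + 1 →
      ψ ((v : Fin n → V) i) = f v i := by
  let P : Submodule F C := ker (rtTail F V i ∘ₗ C.subtype)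
  have hP (v : P) : rtWeight ((v : C) : Fin n → V) ≤ i + 1 :=
    rtTail_eq_zero_iff (R := F).mp v.2
  have hker : ker ((proj i : (Fin n → V) →ₗ[F] V) ∘ₗ C.subtype ∘ₗ P.subtype) =
      ker ((proj i : (Fin n → V) →ₗ[F] V) ∘ₗ f ∘ₗ P.subtype) := by
    ext v
    have hfv : rtWeight (f v) ≤ i + 1 := hf v ▸ hP v
    simp only [mem_ker, comp_apply, Submodule.coe_subtype, proj_apply]
    rw [apply_eq_zero_iff_rtWeight_le (hP v), apply_eq_zero_iff_rtWeight_le hfv, hf]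
  obtain ⟨ψ, hψ⟩ := exists_linearEquiv_comp_eq_of_ker_eq (V := P) hker
  exact ⟨ψ, fun v hv => LinearMap.congr_fun hψ ⟨v, rtTail_eq_zero_iff (R := F).mpr hv⟩⟩

lemma exists_comp_rtTail_eq_sub {ψ : V →ₗ[F] V} {i : Fin n}
    (hψ : ∀ v : C, rtWeight (v : Fin n → V) ≤ i + 1 → ψ ((v : Fin n → V) i) = f v i) :
    ∃ η : ({j : Fin n // i < j} → V) →ₗ[F] V,
      ∀ v : C, η (rtTail F V i v) = f v i - ψ ((v : Fin n → V) i) := by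
  have hker : ker (rtTail F V i ∘ₗ C.subtype) ≤
      ker ((proj i : (Fin n → V) →ₗ[F] V) ∘ₗ f - ψ ∘ₗ proj i ∘ₗ C.subtype) := by
    intro v hv
    simp [hψ v (rtTail_eq_zero_iff (R := F).mp hv)]
  obtain ⟨η, hη⟩ := exists_comp_eq_of_ker_le hker
  exact ⟨η, fun v => by simpa using LinearMap.congr_fun hη v⟩

theorem exists_extension_rtWeight_eq [FiniteDimensional F V]
    (hf : ∀ v : C, rtWeight (f v) = rtWeight (v : Fin n → V)) :
    ∃ g : (Fin n → V) →ₗ[F] (Fin n → V),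
      (∀ v : C, g (v : Fin n → V) = f v) ∧ ∀ w, rtWeight (g w) = rtWeight w := by
  choose ψ hψ using exists_linearEquiv_apply_eq_of_rtWeight_le hf
  choose η hη using fun i => exists_comp_rtTail_eq_sub (hψ i)
  refine ⟨upperTriangular (fun i => ψ i) η, fun v => funext fun i => ?_,
    rtWeight_upperTriangular (fun i => (ψ i).injective) η⟩
  simp [upperTriangular_apply, hη]

end Extension

theorem rt_extension_sublinear_general
    (F K : Type*) [Field F] [Field K] [Fintype K] [Algebra F K]
    (n : ℕ) (C : Submodule F (Fin n → K)) (f : C →ₗ[F] (Fin n → K))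
    (hf : ∀ v : C, rtWeight (f v) = rtWeight (v : Fin n → K)) :
    ∃ g : (Fin n → K) →ₗ[F] (Fin n → K),
      (∀ v : C, g (v : Fin n → K) = f v) ∧
      ∀ w : Fin n → K, rtWeight (g w) = rtWeight w :=
  exists_extension_rtWeight_eq hf

/-- Let `𝔽 ⊆ 𝔽̂` be an extension of finite fields, `C` an `𝔽`-subspace of `𝔽̂^n`, and
`f : C → 𝔽̂^n` an `𝔽`-linear (sublinear) map preserving the Rosenbloom–Tsfasman weight.
Then `f` extends to an RT-weight-preserving `𝔽`-linear map on all of `𝔽̂^n`. -/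
theorem rt_extension_sublinear
    (F K : Type*) [Field F] [Fintype F] [Field K] [Fintype K] [Algebra F K]
    (n : ℕ) (C : Submodule F (Fin n → K)) (f : C →ₗ[F] (Fin n → K))
    (hf : ∀ v : C, rtWeight (f v) = rtWeight (v : Fin n → K)) :
    ∃ g : (Fin n → K) →ₗ[F] (Fin n → K),
      (∀ v : C, g (v : Fin n → K) = f v) ∧
      ∀ w : Fin n → K, rtWeight (g w) = rtWeight w :=
  rt_extension_sublinear_general F K n C f hf
end
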